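/- arXiv:2510.13522 — 6 statements merged into one kernel-verified Lean document; each statement's English description precedes it below -/
import Mathlib

section
/- Under the Slater-type assumption at x̄, the map 𝒲 ↦ G(𝒲; x̄) from ((𝕎×𝕍)^N)^n to ℝ is upper semicontinuous. -/
open Matrix

/-- Extend a `Fin N`-indexed disturbance sequence to `ℕ` (by zero outside the horizon). -/
def padW (d m N : ℕ) (W : Fin N → (Fin d → ℝ) × (Fin m → ℝ)) :
    ℕ → (Fin d → ℝ) × (Fin m → ℝ) :=
  fun t => if h : t < N then W ⟨t, h⟩ else 0

/-- Extend the disturbance-feedback gains `θ = (θ_{t,i})` to `ℕ × ℕ` (by zero). -/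
def padTheta (d m N : ℕ) (θ : Fin N → Fin N → Matrix (Fin m) (Fin d) ℝ) :
    ℕ → ℕ → Matrix (Fin m) (Fin d) ℝ :=
  fun t i => if h : t < N ∧ i < N then θ ⟨t, h.1⟩ ⟨i, h.2⟩ else 0

/-- Extend the affine terms `η = (η_t)` to `ℕ` (by zero). -/
def padEta (m N : ℕ) (η : Fin N → Fin m → ℝ) : ℕ → Fin m → ℝ :=
  fun t => if h : t < N then η ⟨t, h⟩ else 0

/-- The control `u_t = ∑_{i<t} θ_{t,i} (w_i + B v_i) + η_t` generated by the
disturbance-feedback parameterization `p = (θ, η)`. -/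
noncomputable def ctrl (d m N : ℕ) (B : Matrix (Fin d) (Fin m) ℝ)
    (W : Fin N → (Fin d → ℝ) × (Fin m → ℝ))
    (p : (Fin N → Fin N → Matrix (Fin m) (Fin d) ℝ) × (Fin N → Fin m → ℝ))
    (t : ℕ) : Fin m → ℝ :=
  (∑ i ∈ Finset.range t,
      padTheta d m N p.1 t i *ᵥ ((padW d m N W i).1 + B *ᵥ (padW d m N W i).2))
    + padEta m N p.2 t

/-- The state sequence `x_0 = x̄`, `x_{t+1} = A x_t + B u_t + B v_t + w_t` generated by the
disturbance-feedback parameterization `p = (θ, η)`. -/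
noncomputable def state (d m N : ℕ) (A : Matrix (Fin d) (Fin d) ℝ)
    (B : Matrix (Fin d) (Fin m) ℝ) (xbar : Fin d → ℝ)
    (W : Fin N → (Fin d → ℝ) × (Fin m → ℝ))
    (p : (Fin N → Fin N → Matrix (Fin m) (Fin d) ℝ) × (Fin N → Fin m → ℝ)) :
    ℕ → Fin d → ℝ
  | 0 => xbar
  | t + 1 => A *ᵥ state d m N A B xbar W p t + B *ᵥ ctrl d m N B W p t
      + B *ᵥ (padW d m N W t).2 + (padW d m N W t).1

/-- The cost `J_N(x̄, θ, η, W) = ∑_{t<N} c (x_t, u_t) + c_F (x_N)`. -/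
noncomputable def costJ (d m N : ℕ) (A : Matrix (Fin d) (Fin d) ℝ)
    (B : Matrix (Fin d) (Fin m) ℝ)
    (c : (Fin d → ℝ) → (Fin m → ℝ) → ℝ) (cF : (Fin d → ℝ) → ℝ)
    (xbar : Fin d → ℝ) (W : Fin N → (Fin d → ℝ) × (Fin m → ℝ))
    (p : (Fin N → Fin N → Matrix (Fin m) (Fin d) ℝ) × (Fin N → Fin m → ℝ)) : ℝ :=
  (∑ t ∈ Finset.range N, c (state d m N A B xbar W p t) (ctrl d m N B W p t))
    + cF (state d m N A B xbar W p N)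

/-- `(θ, η, r)` satisfies the constraints for the disturbance sequence `W` at `x̄`:
`J_N(x̄,θ,η,W) − r ≤ 0`, `x_t ∈ 𝕄` and `u_t + v_t ∈ 𝕌` for `t = 0,…,N−1`, and `x_N ∈ X_f`. -/
def SatisfiesCon (d m N : ℕ) (A : Matrix (Fin d) (Fin d) ℝ) (B : Matrix (Fin d) (Fin m) ℝ)
    (c : (Fin d → ℝ) → (Fin m → ℝ) → ℝ) (cF : (Fin d → ℝ) → ℝ)
    (M : Set (Fin d → ℝ)) (U : Set (Fin m → ℝ)) (Xf : Set (Fin d → ℝ))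
    (xbar : Fin d → ℝ)
    (p : (Fin N → Fin N → Matrix (Fin m) (Fin d) ℝ) × (Fin N → Fin m → ℝ)) (r : ℝ)
    (W : Fin N → (Fin d → ℝ) × (Fin m → ℝ)) : Prop :=
  costJ d m N A B c cF xbar W p - r ≤ 0 ∧
    (∀ t < N, state d m N A B xbar W p t ∈ M) ∧
    (∀ t < N, ctrl d m N B W p t + (padW d m N W t).2 ∈ U) ∧
    state d m N A B xbar W p N ∈ Xf

/-- The admissible disturbance sequences `(𝕎 × 𝕍)^N`. -/
def Adm (d m N : ℕ) (Wset : Set (Fin d → ℝ)) (Vset : Set (Fin m → ℝ)) :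
    Set (Fin N → (Fin d → ℝ) × (Fin m → ℝ)) :=
  {W | ∀ t, (W t).1 ∈ Wset ∧ (W t).2 ∈ Vset}

/-- Number of decision variables: `n = m d N² + m N + 1`. -/
def nDim (d m N : ℕ) : ℕ := m * d * N ^ 2 + m * N + 1

/-- The relaxed value `G(𝒲; x̄)`: the infimum of the slack `r ≥ 0` over decision variables
`(θ, η, r)` satisfying the constraints for each of the `n` disturbance sequences in `𝒲`. -/
noncomputable def Gval (d m N : ℕ) (A : Matrix (Fin d) (Fin d) ℝ)
    (B : Matrix (Fin d) (Fin m) ℝ)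
    (c : (Fin d → ℝ) → (Fin m → ℝ) → ℝ) (cF : (Fin d → ℝ) → ℝ)
    (Mset : Set (Fin d → ℝ)) (Uset : Set (Fin m → ℝ)) (Xf : Set (Fin d → ℝ))
    (xbar : Fin d → ℝ)
    (Ws : Fin (nDim d m N) → Fin N → (Fin d → ℝ) × (Fin m → ℝ)) : ℝ :=
  sInf {r : ℝ | 0 ≤ r ∧ ∃ p : (Fin N → Fin N → Matrix (Fin m) (Fin d) ℝ) × (Fin N → Fin m → ℝ),
    ∀ i, SatisfiesCon d m N A B c cF Mset Uset Xf xbar p r (Ws i)}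

/-- The Slater-type assumption at `x̄`: there are a nonempty open set
`O ⊆ int 𝕄 × int 𝕌` and `(θ, η, r)` such that for every admissible disturbance sequence
`W` one has `J_N(x̄,θ,η,W) − r < 0`, `(x_t, u_t + v_t) ∈ O` for `t = 0,…,N−1`, and
`x_N ∈ int X_f`. -/
def SlaterCondition (d m N : ℕ) (A : Matrix (Fin d) (Fin d) ℝ)
    (B : Matrix (Fin d) (Fin m) ℝ)
    (c : (Fin d → ℝ) → (Fin m → ℝ) → ℝ) (cF : (Fin d → ℝ) → ℝ)
    (Mset : Set (Fin d → ℝ)) (Uset : Set (Fin m → ℝ)) (Xf : Set (Fin d → ℝ))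
    (Wset : Set (Fin d → ℝ)) (Vset : Set (Fin m → ℝ)) (xbar : Fin d → ℝ) : Prop :=
  ∃ O : Set ((Fin d → ℝ) × (Fin m → ℝ)), IsOpen O ∧ O.Nonempty ∧
    O ⊆ (interior Mset) ×ˢ (interior Uset) ∧
    ∃ (p : (Fin N → Fin N → Matrix (Fin m) (Fin d) ℝ) × (Fin N → Fin m → ℝ)) (r : ℝ),
      ∀ W ∈ Adm d m N Wset Vset,
        costJ d m N A B c cF xbar W p - r < 0 ∧
        (∀ t < N, (state d m N A B xbar W p t,
          ctrl d m N B W p t + (padW d m N W t).2) ∈ O) ∧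
        state d m N A B xbar W p N ∈ interior Xf

lemma ctrl_combo (d m N : ℕ) (B : Matrix (Fin d) (Fin m) ℝ)
    (W : Fin N → (Fin d → ℝ) × (Fin m → ℝ)) (p q) (a b : ℝ) (t : ℕ) :
    ctrl d m N B W (a • p + b • q) t
      = a • ctrl d m N B W p t + b • ctrl d m N B W q t := by
  have hθ : ∀ t i, padTheta d m N (a • p + b • q).1 t i
      = a • padTheta d m N p.1 t i + b • padTheta d m N q.1 t i := by
    intro t i; unfold padTheta; split <;> simp
  have hη : ∀ t, padEta m N (a • p + b • q).2 t
      = a • padEta m N p.2 t + b • padEta m N q.2 t := by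
    intro t; unfold padEta; split <;> simp
  simp only [ctrl, hθ, hη, Matrix.add_mulVec, Matrix.smul_mulVec,
    Finset.sum_add_distrib, ← Finset.smul_sum]
  module

lemma state_combo (d m N : ℕ) (A : Matrix (Fin d) (Fin d) ℝ)
    (B : Matrix (Fin d) (Fin m) ℝ) (xbar : Fin d → ℝ)
    (W : Fin N → (Fin d → ℝ) × (Fin m → ℝ)) (p q) (a b : ℝ) (hab : a + b = 1) :
    ∀ t, state d m N A B xbar W (a • p + b • q) t
      = a • state d m N A B xbar W p t + b • state d m N A B xbar W q t := by
  intro t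
  induction t with
  | zero => show xbar = a • xbar + b • xbar; rw [← add_smul, hab, one_smul]
  | succ t ih =>
      show A *ᵥ state d m N A B xbar W (a • p + b • q) t
          + B *ᵥ ctrl d m N B W (a • p + b • q) t
          + B *ᵥ (padW d m N W t).2 + (padW d m N W t).1 = _
      rw [ih, ctrl_combo]
      show _ = a • (A *ᵥ state d m N A B xbar W p t + B *ᵥ ctrl d m N B W p t
          + B *ᵥ (padW d m N W t).2 + (padW d m N W t).1)
        + b • (A *ᵥ state d m N A B xbar W q t + B *ᵥ ctrl d m N B W q t
          + B *ᵥ (padW d m N W t).2 + (padW d m N W t).1)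
      simp only [Matrix.mulVec_add, Matrix.mulVec_smul, smul_add]
      match_scalars <;> linarith

lemma continuous_mulVecR {k l : ℕ} (M : Matrix (Fin k) (Fin l) ℝ) :
    Continuous fun v : Fin l → ℝ => M *ᵥ v :=
  LinearMap.continuous_of_finiteDimensional M.mulVecLin

lemma continuous_padW (d m N : ℕ) (i : ℕ) :
    Continuous fun W : Fin N → (Fin d → ℝ) × (Fin m → ℝ) => padW d m N W i := by
  unfold padW
  by_cases h : i < N
  · simp only [dif_pos h]; exact continuous_apply _
  · simp only [dif_neg h]; exact continuous_const

lemma continuous_ctrl (d m N : ℕ) (B : Matrix (Fin d) (Fin m) ℝ) (p) (t : ℕ) :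
    Continuous fun W : Fin N → (Fin d → ℝ) × (Fin m → ℝ) => ctrl d m N B W p t := by
  unfold ctrl
  refine Continuous.add ?_ continuous_const
  refine continuous_finset_sum _ fun i _ => ?_
  exact (continuous_mulVecR _).comp
    ((continuous_fst.comp (continuous_padW d m N i)).add
      ((continuous_mulVecR B).comp (continuous_snd.comp (continuous_padW d m N i))))

lemma continuous_state (d m N : ℕ) (A : Matrix (Fin d) (Fin d) ℝ)
    (B : Matrix (Fin d) (Fin m) ℝ) (xbar : Fin d → ℝ) (p) :
    ∀ t, Continuous fun W : Fin N → (Fin d → ℝ) × (Fin m → ℝ) =>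
      state d m N A B xbar W p t
  | 0 => continuous_const
  | (t + 1) => by
      show Continuous fun W : Fin N → (Fin d → ℝ) × (Fin m → ℝ) =>
        A *ᵥ state d m N A B xbar W p t + B *ᵥ ctrl d m N B W p t
          + B *ᵥ (padW d m N W t).2 + (padW d m N W t).1
      exact ((((continuous_mulVecR A).comp (continuous_state d m N A B xbar p t)).add
        ((continuous_mulVecR B).comp (continuous_ctrl d m N B p t))).add
        ((continuous_mulVecR B).comp (continuous_snd.comp (continuous_padW d m N t)))).add
        (continuous_fst.comp (continuous_padW d m N t))

lemma continuous_costJ (d m N : ℕ) (A : Matrix (Fin d) (Fin d) ℝ)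
    (B : Matrix (Fin d) (Fin m) ℝ)
    (c : (Fin d → ℝ) → (Fin m → ℝ) → ℝ) (cF : (Fin d → ℝ) → ℝ)
    (hccont : Continuous fun pr : (Fin d → ℝ) × (Fin m → ℝ) => c pr.1 pr.2)
    (hcFcont : Continuous cF) (xbar : Fin d → ℝ) (p) :
    Continuous fun W : Fin N → (Fin d → ℝ) × (Fin m → ℝ) =>
      costJ d m N A B c cF xbar W p := by
  unfold costJ
  refine Continuous.add (continuous_finset_sum _ fun t _ => ?_)
    (hcFcont.comp (continuous_state d m N A B xbar p N))
  exact hccont.comp ((continuous_state d m N A B xbar p t).prodMk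
    (continuous_ctrl d m N B p t))

lemma costJ_combo (d m N : ℕ) (A : Matrix (Fin d) (Fin d) ℝ)
    (B : Matrix (Fin d) (Fin m) ℝ)
    (c : (Fin d → ℝ) → (Fin m → ℝ) → ℝ) (cF : (Fin d → ℝ) → ℝ)
    (hcconv : ConvexOn ℝ Set.univ fun pr : (Fin d → ℝ) × (Fin m → ℝ) => c pr.1 pr.2)
    (hcFconv : ConvexOn ℝ Set.univ cF)
    (xbar : Fin d → ℝ) (W : Fin N → (Fin d → ℝ) × (Fin m → ℝ)) (p q)
    (a b : ℝ) (ha : 0 ≤ a) (hb : 0 ≤ b) (hab : a + b = 1) :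
    costJ d m N A B c cF xbar W (a • p + b • q)
      ≤ a * costJ d m N A B c cF xbar W p + b * costJ d m N A B c cF xbar W q := by
  have hc' : ∀ t, c (state d m N A B xbar W (a • p + b • q) t)
        (ctrl d m N B W (a • p + b • q) t)
      ≤ a * c (state d m N A B xbar W p t) (ctrl d m N B W p t)
        + b * c (state d m N A B xbar W q t) (ctrl d m N B W q t) := by
    intro t
    rw [state_combo d m N A B xbar W p q a b hab, ctrl_combo]
    exact hcconv.2 (Set.mem_univ (state d m N A B xbar W p t, ctrl d m N B W p t))
      (Set.mem_univ (state d m N A B xbar W q t, ctrl d m N B W q t)) ha hb hab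
  have hF : cF (state d m N A B xbar W (a • p + b • q) N)
      ≤ a * cF (state d m N A B xbar W p N) + b * cF (state d m N A B xbar W q N) := by
    rw [state_combo d m N A B xbar W p q a b hab]
    exact hcFconv.2 (Set.mem_univ _) (Set.mem_univ _) ha hb hab
  calc costJ d m N A B c cF xbar W (a • p + b • q)
      ≤ (∑ t ∈ Finset.range N, (a * c (state d m N A B xbar W p t) (ctrl d m N B W p t)
          + b * c (state d m N A B xbar W q t) (ctrl d m N B W q t)))
        + (a * cF (state d m N A B xbar W p N) + b * cF (state d m N A B xbar W q N)) :=
        add_le_add (Finset.sum_le_sum fun t _ => hc' t) hF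
    _ = _ := by simp only [costJ, Finset.sum_add_distrib, mul_add, Finset.mul_sum]; ring

lemma ctrlv_combo (d m N : ℕ) (B : Matrix (Fin d) (Fin m) ℝ)
    (W : Fin N → (Fin d → ℝ) × (Fin m → ℝ)) (p q) (a b : ℝ) (hab : a + b = 1) (t : ℕ) :
    ctrl d m N B W (a • p + b • q) t + (padW d m N W t).2
      = a • (ctrl d m N B W p t + (padW d m N W t).2)
        + b • (ctrl d m N B W q t + (padW d m N W t).2) := by
  rw [ctrl_combo]
  match_scalars <;> linarith


/-- **Upper semicontinuity of the relaxed value function.**  Under the Slater-type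
assumption at `x̄`, the map `𝒲 ↦ G(𝒲; x̄)` is upper semicontinuous on the set of
admissible tuples `((𝕎×𝕍)^N)^n`. -/
theorem Gval_upperSemicontinuousOn (d m N : ℕ) (hd : 1 ≤ d) (hm : 1 ≤ m) (hN : 1 ≤ N)
    (A : Matrix (Fin d) (Fin d) ℝ) (B : Matrix (Fin d) (Fin m) ℝ)
    (Mset : Set (Fin d → ℝ)) (Uset : Set (Fin m → ℝ))
    (Wset : Set (Fin d → ℝ)) (Vset : Set (Fin m → ℝ)) (Xf : Set (Fin d → ℝ))
    (hM : IsCompact Mset) (hMconv : Convex ℝ Mset) (hM0 : (0 : Fin d → ℝ) ∈ interior Mset)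
    (hU : IsCompact Uset) (hUconv : Convex ℝ Uset) (hU0 : (0 : Fin m → ℝ) ∈ interior Uset)
    (hW : IsCompact Wset) (hWconv : Convex ℝ Wset)
    (hV : IsCompact Vset) (hVconv : Convex ℝ Vset)
    (hXf : IsClosed Xf) (hXfconv : Convex ℝ Xf) (hXfsub : Xf ⊆ Mset)
    (hXf0 : (0 : Fin d → ℝ) ∈ interior Xf)
    (c : (Fin d → ℝ) → (Fin m → ℝ) → ℝ) (cF : (Fin d → ℝ) → ℝ)
    (hccont : Continuous fun pr : (Fin d → ℝ) × (Fin m → ℝ) => c pr.1 pr.2)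
    (hcconv : ConvexOn ℝ Set.univ fun pr : (Fin d → ℝ) × (Fin m → ℝ) => c pr.1 pr.2)
    (hcFcont : Continuous cF) (hcFconv : ConvexOn ℝ Set.univ cF)
    (xbar : Fin d → ℝ)
    (hSlater : SlaterCondition d m N A B c cF Mset Uset Xf Wset Vset xbar) :
    UpperSemicontinuousOn (Gval d m N A B c cF Mset Uset Xf xbar)
      {Ws : Fin (nDim d m N) → Fin N → (Fin d → ℝ) × (Fin m → ℝ) |
        ∀ i, Ws i ∈ Adm d m N Wset Vset} := by
  classical
  obtain ⟨O, hOopen, -, hOsub, ps, rs, hS⟩ := hSlater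
  intro Ws0 hWs0 y hy
  -- the Slater point is feasible with slack `max rs 0`
  have hfeas : (max rs 0) ∈ {r : ℝ | 0 ≤ r ∧
      ∃ p : (Fin N → Fin N → Matrix (Fin m) (Fin d) ℝ) × (Fin N → Fin m → ℝ),
        ∀ i, SatisfiesCon d m N A B c cF Mset Uset Xf xbar p r (Ws0 i)} := by
    refine ⟨le_max_right _ _, ps, fun i => ?_⟩
    obtain ⟨h1, h2, h3⟩ := hS (Ws0 i) (hWs0 i)
    refine ⟨by linarith [le_max_left rs (0 : ℝ)], fun t ht => ?_, fun t ht => ?_,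
      interior_subset h3⟩
    · exact interior_subset ((hOsub (h2 t ht)).1)
    · exact interior_subset ((hOsub (h2 t ht)).2)
  have hsInf : sInf {r : ℝ | 0 ≤ r ∧
      ∃ p : (Fin N → Fin N → Matrix (Fin m) (Fin d) ℝ) × (Fin N → Fin m → ℝ),
        ∀ i, SatisfiesCon d m N A B c cF Mset Uset Xf xbar p r (Ws0 i)} < y := hy
  obtain ⟨r0, hr0S, hr0y⟩ := exists_lt_of_csInf_lt ⟨_, hfeas⟩ hsInf
  obtain ⟨hr0nn, p0, hp0⟩ := hr0S
  set Δ : ℝ := max rs 0 - r0 with hΔ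
  have habs : 0 ≤ |Δ| := abs_nonneg _
  have hden : 0 < 2 * (1 + |Δ|) := by positivity
  set lam : ℝ := min 1 ((y - r0) / (2 * (1 + |Δ|))) with hlamdef
  have hlam0 : 0 < lam := lt_min one_pos (div_pos (by linarith) hden)
  have hlam1 : lam ≤ 1 := min_le_left _ _
  set a : ℝ := 1 - lam with hadef
  have haa : 0 ≤ a := by simp only [hadef]; linarith
  have hab : a + lam = 1 := by simp only [hadef]; ring
  set pl := a • p0 + lam • ps with hpl
  set rl : ℝ := a * r0 + lam * max rs 0 with hrl
  have hrl0 : 0 ≤ rl :=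
    add_nonneg (mul_nonneg haa hr0nn) (mul_nonneg hlam0.le (le_max_right _ _))
  have hrly : rl < y := by
    have h1 : lam ≤ (y - r0) / (2 * (1 + |Δ|)) := min_le_right _ _
    have h2 : lam * (2 * (1 + |Δ|)) ≤ y - r0 := by
      rw [← le_div_iff₀ hden]; exact h1
    have h3 : lam * Δ ≤ lam * |Δ| := mul_le_mul_of_nonneg_left (le_abs_self Δ) hlam0.le
    have h4 : rl = r0 + lam * Δ := by simp only [hrl, hadef, hΔ]; ring
    nlinarith
  -- strict feasibility of `(pl, rl)` at `Ws0`
  have hstrict : ∀ i : Fin (nDim d m N),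
      costJ d m N A B c cF xbar (Ws0 i) pl < rl ∧
      (∀ t ∈ Finset.range N, state d m N A B xbar (Ws0 i) pl t ∈ interior Mset) ∧
      (∀ t ∈ Finset.range N,
        ctrl d m N B (Ws0 i) pl t + (padW d m N (Ws0 i) t).2 ∈ interior Uset) ∧
      state d m N A B xbar (Ws0 i) pl N ∈ interior Xf := by
    intro i
    obtain ⟨hJ0, hM0', hU0', hXf0'⟩ := hp0 i
    obtain ⟨hJs, hOs, hXs⟩ := hS (Ws0 i) (hWs0 i)
    refine ⟨?_, ?_, ?_, ?_⟩
    · have h1 := costJ_combo d m N A B c cF hcconv hcFconv xbar (Ws0 i) p0 ps a lam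
        haa hlam0.le hab
      have h2 : costJ d m N A B c cF xbar (Ws0 i) p0 ≤ r0 := by linarith
      have h3 : costJ d m N A B c cF xbar (Ws0 i) ps < max rs 0 :=
        lt_of_lt_of_le (by linarith) (le_max_left _ _)
      have h4 : a * costJ d m N A B c cF xbar (Ws0 i) p0 ≤ a * r0 :=
        mul_le_mul_of_nonneg_left h2 haa
      have h5 : lam * costJ d m N A B c cF xbar (Ws0 i) ps < lam * max rs 0 :=
        mul_lt_mul_of_pos_left h3 hlam0
      calc costJ d m N A B c cF xbar (Ws0 i) pl
          ≤ a * costJ d m N A B c cF xbar (Ws0 i) p0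
            + lam * costJ d m N A B c cF xbar (Ws0 i) ps := h1
        _ < rl := by rw [hrl]; linarith
    · intro t ht
      rw [hpl, state_combo d m N A B xbar (Ws0 i) p0 ps a lam hab]
      exact hMconv.combo_self_interior_mem_interior
        (hM0' t (Finset.mem_range.1 ht)) ((hOsub (hOs t (Finset.mem_range.1 ht))).1)
        haa hlam0 hab
    · intro t ht
      rw [hpl, ctrlv_combo d m N B (Ws0 i) p0 ps a lam hab]
      exact hUconv.combo_self_interior_mem_interior
        (hU0' t (Finset.mem_range.1 ht)) ((hOsub (hOs t (Finset.mem_range.1 ht))).2)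
        haa hlam0 hab
    · rw [hpl, state_combo d m N A B xbar (Ws0 i) p0 ps a lam hab]
      exact hXfconv.combo_self_interior_mem_interior hXf0' hXs haa hlam0 hab
  -- the strict feasibility conditions are open in `Ws`
  have hev : ∀ᶠ Ws in nhds Ws0, ∀ i : Fin (nDim d m N),
      costJ d m N A B c cF xbar (Ws i) pl < rl ∧
      (∀ t ∈ Finset.range N, state d m N A B xbar (Ws i) pl t ∈ interior Mset) ∧
      (∀ t ∈ Finset.range N,
        ctrl d m N B (Ws i) pl t + (padW d m N (Ws i) t).2 ∈ interior Uset) ∧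
      state d m N A B xbar (Ws i) pl N ∈ interior Xf := by
    rw [Filter.eventually_all]
    intro i
    have hci : Continuous fun Ws : Fin (nDim d m N) → Fin N → (Fin d → ℝ) × (Fin m → ℝ) =>
      Ws i := continuous_apply i
    obtain ⟨hs1, hs2, hs3, hs4⟩ := hstrict i
    refine Filter.Eventually.and ?_ (Filter.Eventually.and ?_ (Filter.Eventually.and ?_ ?_))
    · have hca : ContinuousAt (fun Ws : Fin (nDim d m N) → Fin N → (Fin d → ℝ) × (Fin m → ℝ) =>
          costJ d m N A B c cF xbar (Ws i) pl) Ws0 :=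
        ((continuous_costJ d m N A B c cF hccont hcFcont xbar pl).comp hci).continuousAt
      exact ContinuousAt.eventually_lt hca continuousAt_const hs1
    · rw [Filter.eventually_all_finset]
      intro t ht
      exact (((continuous_state d m N A B xbar pl t).comp hci).continuousAt).eventually_mem
        (isOpen_interior.mem_nhds (hs2 t ht))
    · rw [Filter.eventually_all_finset]
      intro t ht
      have hcont : Continuous fun Ws : Fin (nDim d m N) → Fin N → (Fin d → ℝ) × (Fin m → ℝ) =>
          ctrl d m N B (Ws i) pl t + (padW d m N (Ws i) t).2 :=
        ((continuous_ctrl d m N B pl t).comp hci).add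
          (continuous_snd.comp ((continuous_padW d m N t).comp hci))
      exact hcont.continuousAt.eventually_mem (isOpen_interior.mem_nhds (hs3 t ht))
    · exact (((continuous_state d m N A B xbar pl N).comp hci).continuousAt).eventually_mem
        (isOpen_interior.mem_nhds hs4)
  refine Filter.Eventually.mono (Filter.Eventually.filter_mono nhdsWithin_le_nhds hev) ?_
  intro Ws hWs
  have hmem : rl ∈ {r : ℝ | 0 ≤ r ∧
      ∃ p : (Fin N → Fin N → Matrix (Fin m) (Fin d) ℝ) × (Fin N → Fin m → ℝ),
        ∀ i, SatisfiesCon d m N A B c cF Mset Uset Xf xbar p r (Ws i)} := by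
    refine ⟨hrl0, pl, fun i => ?_⟩
    obtain ⟨h1, h2, h3, h4⟩ := hWs i
    exact ⟨by linarith,
      fun t ht => interior_subset (h2 t (Finset.mem_range.2 ht)),
      fun t ht => interior_subset (h3 t (Finset.mem_range.2 ht)),
      interior_subset h4⟩
  have hle : Gval d m N A B c cF Mset Uset Xf xbar Ws ≤ rl :=
    csInf_le ⟨0, fun r hr => hr.1⟩ hmem
  exact lt_of_le_of_lt hle hrly
end

section
/- Let Z ⊂ ℝ^p be closed, let f : ℝ^p → ℝ be continuous, and let g = (g_1,…,g_k) : ℝ^p × ℝ^q → ℝ^k be jointly continuous. For a parameter w ∈ ℝ^q define the feasible set F(w) := {z ∈ Z : g_j(z,w) ≤ 0 for j = 1,…,k} and the value v(w) := inf{f(z) : z ∈ F(w)} (with inf over the empty set equal to +∞). Suppose at a point w̄ that inf{f(z) : z ∈ Z, g_j(z,w̄) < 0 for j = 1,…,k} = v(w̄), i.e., the value is achieved in the limit along strictly feasible points. Then v is upper semicontinuous at w̄: limsup_{w → w̄} v(w) ≤ v(w̄). -/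
/-- **Upper semicontinuity of the value of a parametric program.**
Let `Z ⊆ ℝᵖ` be closed, `f` continuous, `g` jointly continuous with values in `ℝᵏ`.
For a parameter `w` let `F w = {z ∈ Z | g z w j ≤ 0 ∀ j}` and let
`v w = inf {f z | z ∈ F w}` (in `EReal`, so `inf ∅ = +∞`).  If at `w̄` the value is
achieved in the limit along strictly feasible points, i.e.
`inf {f z | z ∈ Z, g z w̄ j < 0 ∀ j} = v w̄`, then `v` is upper semicontinuous at `w̄`. -/
theorem value_function_usc (p q k : ℕ)
    (Z : Set (Fin p → ℝ)) (hZ : IsClosed Z)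
    (f : (Fin p → ℝ) → ℝ) (hf : Continuous f)
    (g : (Fin p → ℝ) → (Fin q → ℝ) → Fin k → ℝ)
    (hg : Continuous fun x : (Fin p → ℝ) × (Fin q → ℝ) => g x.1 x.2)
    (F : (Fin q → ℝ) → Set (Fin p → ℝ))
    (hF : ∀ w, F w = {z ∈ Z | ∀ j : Fin k, g z w j ≤ 0})
    (v : (Fin q → ℝ) → EReal)
    (hv : ∀ w, v w = sInf ((fun z => (f z : EReal)) '' F w))
    (wbar : Fin q → ℝ)
    (hstrict : sInf ((fun z => (f z : EReal)) '' {z ∈ Z | ∀ j : Fin k, g z wbar j < 0})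
      = v wbar) :
    UpperSemicontinuousAt v wbar := by
  intro c hc
  rw [← hstrict] at hc
  obtain ⟨y, ⟨z, ⟨hzZ, hzlt⟩, rfl⟩, hyc⟩ := sInf_lt_iff.mp hc
  have hcont : Continuous fun w => g z w :=
    hg.comp (continuous_const.prodMk continuous_id)
  have hopen : IsOpen {w : Fin q → ℝ | ∀ j, g z w j < 0} := by
    have : {w : Fin q → ℝ | ∀ j, g z w j < 0} = ⋂ j, {w | g z w j < 0} := by
      ext w; simp
    rw [this]
    exact isOpen_iInter_of_finite fun j =>
      isOpen_lt ((continuous_apply j).comp hcont) continuous_const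
  have hmem : wbar ∈ {w : Fin q → ℝ | ∀ j, g z w j < 0} := hzlt
  filter_upwards [hopen.mem_nhds hmem] with w hw
  have hzF : z ∈ F w := by
    rw [hF]; exact ⟨hzZ, fun j => (hw j).le⟩
  calc v w ≤ (f z : EReal) := by rw [hv]; exact sInf_le ⟨z, hzF, rfl⟩
    _ < c := hyc
end

section
/- Let ψ ∈ 𝒮(ℝ^d) (Schwartz space) with ∫_{ℝ^d} ψ(y) dy = 1. Then the saturation term vanishes as the shape parameter grows: for every δ > 0 there exists D_min > 0 such that ε₀(ψ,D) ≤ δ for all D ≥ D_min. -/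
/-- The lattice point `m h ∈ ℝ^d` for `m ∈ ℤ^d`, `h > 0`. -/
noncomputable def gridPt (d : ℕ) (h : ℝ) (m : Fin d → ℤ) : EuclideanSpace ℝ (Fin d) :=
  (WithLp.equiv 2 (Fin d → ℝ)).symm fun i => (m i : ℝ) * h

/-- The Fourier transform `Fψ(ξ) = ∫ ψ(y) e^{−2πi⟨y,ξ⟩} dy`. -/
noncomputable def fourierOf (d : ℕ) (ψ : EuclideanSpace ℝ (Fin d) → ℝ)
    (ξ : EuclideanSpace ℝ (Fin d)) : ℂ :=
  ∫ y : EuclideanSpace ℝ (Fin d),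
    (ψ y : ℂ) * Complex.exp (-(2 * Real.pi * Complex.I) * ((∑ i, y i * ξ i : ℝ) : ℂ))

open MeasureTheory
open scoped FourierTransform RealInnerProductSpace

noncomputable def cpx (d : ℕ) (ψ : SchwartzMap (EuclideanSpace ℝ (Fin d)) ℝ) :
    SchwartzMap (EuclideanSpace ℝ (Fin d)) ℂ where
  toFun x := (ψ x : ℂ)
  smooth' := Complex.ofRealCLM.contDiff.comp ψ.smooth'
  decay' := by
    intro k n
    obtain ⟨C, hC⟩ := ψ.decay' k n
    refine ⟨C, fun x => ?_⟩
    have h : (fun x => ((ψ x : ℝ) : ℂ)) = Complex.ofRealLI ∘ ψ := rfl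
    rw [h, Complex.ofRealLI.norm_iteratedFDeriv_comp_left (ψ.smooth ⊤).contDiffAt (by exact_mod_cast le_top)]
    exact hC x

lemma fourier_eq (d : ℕ) (ψ : SchwartzMap (EuclideanSpace ℝ (Fin d)) ℝ)
    (ξ : EuclideanSpace ℝ (Fin d)) : fourierOf d (⇑ψ) ξ = 𝓕 (⇑(cpx d ψ)) ξ := by
  rw [Real.fourier_eq']
  unfold fourierOf
  congr 1
  ext y
  rw [smul_eq_mul, mul_comm]
  have h1 : (inner ℝ y ξ : ℝ) = ∑ i, y i * ξ i := by
    simp [PiLp.inner_apply, RCLike.inner_apply, conj_trivial, mul_comm]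
  congr 1
  rw [h1]
  push_cast
  ring

lemma sum_g : Summable (fun n : ℤ => ((1 + |(n : ℝ)|) ^ 2)⁻¹) := by
  have hnat : Summable (fun n : ℕ => ((1 + (n : ℝ)) ^ 2)⁻¹) := by
    have h2 : Summable (fun n : ℕ => (((n : ℝ)) ^ 2)⁻¹) := by
      simpa [one_div] using Real.summable_one_div_nat_pow.2 (by norm_num : 2 ≤ 2)
    have := (summable_nat_add_iff 1).2 h2
    refine this.congr fun n => ?_
    push_cast; ring_nf
  apply Summable.of_nat_of_neg <;> · refine hnat.congr fun n => ?_; simp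

set_option maxHeartbeats 1000000 in
lemma sum_prod_g (g : ℤ → ℝ) (hg : Summable g) (hg0 : ∀ n, 0 ≤ g n) :
    ∀ d : ℕ, Summable (fun ν : Fin d → ℤ => ∏ i, g (ν i)) := by
  intro d
  induction d with
  | zero => exact summable_of_finite_support (Set.toFinite _)
  | succ n ih =>
    have key : Summable (fun p : ℤ × (Fin n → ℤ) => g p.1 * ∏ i, g (p.2 i)) := by
      apply Summable.mul_of_nonneg hg ih hg0
      intro ν
      exact Finset.prod_nonneg fun i _ => hg0 _
    have := key.comp_injective (Fin.consEquiv fun _ : Fin (n + 1) => ℤ).symm.injective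
    refine this.congr fun ν => ?_
    rw [Fin.prod_univ_succ]
    rfl

noncomputable def intVec (d : ℕ) (m : Fin d → ℤ) : EuclideanSpace ℝ (Fin d) :=
  (WithLp.equiv 2 (Fin d → ℝ)).symm fun i => (m i : ℝ)

lemma gridPt_eq_smul (d : ℕ) (h : ℝ) (m : Fin d → ℤ) : gridPt d h m = h • intVec d m := by
  ext i
  simp [gridPt, intVec, mul_comm]

lemma norm_gridPt (d : ℕ) (h : ℝ) (m : Fin d → ℤ) :
    ‖gridPt d h m‖ = |h| * ‖intVec d m‖ := by
  rw [gridPt_eq_smul, norm_smul, Real.norm_eq_abs]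

lemma coord_le_norm (d : ℕ) (m : Fin d → ℤ) (i : Fin d) : |(m i : ℝ)| ≤ ‖intVec d m‖ := by
  rw [EuclideanSpace.norm_eq, ← Real.sqrt_sq_eq_abs]
  apply Real.sqrt_le_sqrt
  have : ((m i : ℝ))^2 = ‖intVec d m i‖^2 := by simp [intVec]
  rw [this]
  exact Finset.single_le_sum (f := fun j => ‖intVec d m j‖^2)
    (fun j _ => sq_nonneg _) (Finset.mem_univ i)

lemma one_le_norm_intVec (d : ℕ) (ν : Fin d → ℤ) (hν : ν ≠ 0) : 1 ≤ ‖intVec d ν‖ := by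
  obtain ⟨j, hj⟩ := Function.ne_iff.1 hν
  refine le_trans ?_ (coord_le_norm d ν j)
  exact_mod_cast Int.one_le_abs (by simpa using hj)

lemma norm_exp_I (r : ℝ) : ‖Complex.exp ((2 * Real.pi * Complex.I) * (r : ℂ))‖ = 1 := by
  rw [Complex.norm_exp]
  simp [mul_assoc, mul_comm]

lemma fourier_decay (d : ℕ) (ψ : SchwartzMap (EuclideanSpace ℝ (Fin d)) ℝ) :
    ∃ C > 0, ∀ t : ℝ, 1 ≤ t → ∀ ν : Fin d → ℤ, ν ≠ 0 →
      ‖𝓕 (⇑(cpx d ψ)) (gridPt d t ν)‖ ≤ C / t * ∏ i, ((1 + |(ν i : ℝ)|) ^ 2)⁻¹ := by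
  obtain ⟨C, hC0, hC⟩ := (SchwartzMap.fourierTransformCLM ℝ (cpx d ψ)).decay (2*d+1) 0
  refine ⟨C * 4 ^ d, by positivity, fun t ht ν hν => ?_⟩
  set r := ‖intVec d ν‖ with hr
  have hr1 : 1 ≤ r := one_le_norm_intVec d ν hν
  have ht0 : 0 < t := lt_of_lt_of_le one_pos ht
  have hr0 : 0 < r := lt_of_lt_of_le one_pos hr1
  have hx : ‖gridPt d t ν‖ = t * r := by rw [norm_gridPt, abs_of_pos ht0]
  have hΦ : ‖𝓕 (⇑(cpx d ψ)) (gridPt d t ν)‖ ≤ C / (t * r) ^ (2 * d + 1) := by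
    have h := hC (gridPt d t ν)
    rw [norm_iteratedFDeriv_zero, SchwartzMap.fourierTransformCLM_apply, SchwartzMap.fourier_coe, hx] at h
    rw [le_div_iff₀ (by positivity)]
    linarith [h]
  refine hΦ.trans ?_
  have hprod_pos : (0:ℝ) < ∏ i, (1 + |(ν i : ℝ)|) ^ 2 := by positivity
  have step1 : ∏ i, (1 + |(ν i : ℝ)|) ≤ (2 * r) ^ d := by
    calc ∏ i, (1 + |(ν i : ℝ)|) ≤ ∏ _i : Fin d, (2 * r) := by
          refine Finset.prod_le_prod (fun i _ => by positivity) (fun i _ => ?_)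
          have := coord_le_norm d ν i
          rw [← hr] at this
          linarith
      _ = (2 * r) ^ d := by rw [Finset.prod_const, Finset.card_univ, Fintype.card_fin]
  have step2 : ∏ i, (1 + |(ν i : ℝ)|) ^ 2 ≤ 4 ^ d * r ^ (2 * d) := by
    have h2 : ∏ i, (1 + |(ν i : ℝ)|) ^ 2 = (∏ i, (1 + |(ν i : ℝ)|)) ^ 2 := by
      rw [Finset.prod_pow]
    rw [h2]
    calc (∏ i, (1 + |(ν i : ℝ)|)) ^ 2 ≤ ((2 * r) ^ d) ^ 2 := by
          apply pow_le_pow_left₀ (Finset.prod_nonneg fun i _ => by positivity) step1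
      _ = 4 ^ d * r ^ (2 * d) := by
          rw [mul_pow, mul_pow, ← pow_mul, ← pow_mul, mul_comm d 2, pow_mul]; norm_num
  set P := ∏ i, (1 + |(ν i : ℝ)|) ^ 2 with hP
  have step3 : t * P ≤ 4 ^ d * (t * r) ^ (2 * d + 1) := by
    have h1 : t ≤ t ^ (2 * d + 1) := le_self_pow₀ ht (by omega)
    have h2 : r ^ (2 * d) ≤ r ^ (2 * d + 1) := pow_le_pow_right₀ hr1 (by omega)
    have h3 : t * P ≤ t ^ (2 * d + 1) * (4 ^ d * r ^ (2 * d + 1)) := by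
      have ht1 : t ≤ t ^ (2 * d + 1) := h1
      have hP0 : 0 ≤ P := le_of_lt hprod_pos
      have := mul_le_mul ht1 (step2.trans
        (mul_le_mul_of_nonneg_left h2 (by positivity))) hP0
        (pow_nonneg (le_of_lt ht0) _)
      linarith [this]
    rw [mul_pow]
    linarith [h3]
  have hPinv : ∏ i, ((1 + |(ν i : ℝ)|) ^ 2)⁻¹ = P⁻¹ := by
    rw [hP, ← Finset.prod_inv_distrib]
  rw [hPinv]
  have hgoal : C / (t * r) ^ (2 * d + 1) ≤ C * 4 ^ d / (t * P) := by
    rw [div_le_div_iff₀ (by positivity) (by positivity)]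
    nlinarith [mul_le_mul_of_nonneg_left step3 (le_of_lt hC0)]
  refine hgoal.trans (le_of_eq ?_)
  field_simp

/-- The saturation term `ε₀(ψ,D) = sup_x |∑_{ν ∈ ℤ^d∖{0}} Fψ(√D ν) e^{2πi⟨x,ν⟩}|`. -/
noncomputable def satTerm (d : ℕ) (ψ : EuclideanSpace ℝ (Fin d) → ℝ) (D : ℝ) : ℝ :=
  ⨆ x : EuclideanSpace ℝ (Fin d),
    ‖∑' ν : {ν : Fin d → ℤ // ν ≠ 0},
        fourierOf d ψ (gridPt d (Real.sqrt D) ν.1) *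
          Complex.exp ((2 * Real.pi * Complex.I) * ((∑ i, x i * (ν.1 i : ℝ) : ℝ) : ℂ))‖

/-- The quasi-interpolant
`(M_{h,D} f)(x) = D^{−d/2} ∑_{m ∈ ℤ^d} f(mh) ψ((x − mh)/(h√D))`. -/
noncomputable def quasiInterp (d : ℕ) (ψ f : EuclideanSpace ℝ (Fin d) → ℝ)
    (h D : ℝ) (x : EuclideanSpace ℝ (Fin d)) : ℝ :=
  D ^ (-(d : ℝ) / 2) *
    ∑' m : Fin d → ℤ, f (gridPt d h m) * ψ ((h * Real.sqrt D)⁻¹ • (x - gridPt d h m))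

/-- The iterated partial derivative `∂^α ψ` along a list of coordinate directions. -/
noncomputable def multiDeriv (d : ℕ) :
    List (Fin d) → (EuclideanSpace ℝ (Fin d) → ℝ) → EuclideanSpace ℝ (Fin d) → ℝ
  | [], f => f
  | i :: l, f => fun x => fderiv ℝ (multiDeriv d l f) x (EuclideanSpace.single i 1)

/-- The continuous moment condition of order `M`: `∫ ψ = 1` and all moments of multi-order
`1 ≤ |α| < M` vanish. -/
def MomentCondition (d : ℕ) (ψ : EuclideanSpace ℝ (Fin d) → ℝ) (M : ℕ) : Prop :=
  (∫ y : EuclideanSpace ℝ (Fin d), ψ y) = 1 ∧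
    ∀ α : Fin d → ℕ, 1 ≤ ∑ i, α i → ∑ i, α i < M →
      (∫ y : EuclideanSpace ℝ (Fin d), (∏ i, (y i) ^ (α i)) * ψ y) = 0

/-- The decay condition with exponent `K` and constant `C₀`:
`(1+‖x‖)^K |∂^α ψ(x)| ≤ C₀` for all `x` and all multi-indices with `|α| ≤ ⌊d/2⌋ + 1`. -/
def DecayCondition (d : ℕ) (ψ : EuclideanSpace ℝ (Fin d) → ℝ) (K C₀ : ℝ) : Prop :=
  ∀ l : List (Fin d), l.length ≤ d / 2 + 1 →
    ∀ x : EuclideanSpace ℝ (Fin d), (1 + ‖x‖) ^ K * |multiDeriv d l ψ x| ≤ C₀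

/-- **Vanishing of the saturation term.**  For a Schwartz function `ψ` with `∫ ψ = 1`, the
saturation term vanishes as the shape parameter grows: for every `δ > 0` there is
`D_min > 0` with `ε₀(ψ,D) ≤ δ` for all `D ≥ D_min`. -/
theorem satTerm_vanishes (d : ℕ) (hd : 1 ≤ d)
    (ψ : SchwartzMap (EuclideanSpace ℝ (Fin d)) ℝ)
    (hint : (∫ y : EuclideanSpace ℝ (Fin d), ψ y) = 1) :
    ∀ δ > (0 : ℝ), ∃ Dmin > (0 : ℝ), ∀ D ≥ Dmin, satTerm d (⇑ψ) D ≤ δ := by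
  intro δ hδ
  obtain ⟨C, hC0, hC⟩ := fourier_decay d ψ
  set G : (Fin d → ℤ) → ℝ := fun ν => ∏ i, ((1 + |(ν i : ℝ)|) ^ 2)⁻¹ with hG
  have hGsum : Summable G := sum_prod_g _ sum_g (fun n => by positivity) d
  have hG0 : ∀ ν, 0 ≤ G ν := fun ν => Finset.prod_nonneg fun i _ => by positivity
  set S := ∑' ν, G ν with hSdef
  have hS0 : 0 ≤ S := tsum_nonneg hG0
  refine ⟨max 1 ((C * (S + 1) / δ) ^ 2), lt_of_lt_of_le one_pos (le_max_left _ _),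
    fun D hD => ?_⟩
  set t := Real.sqrt D with htdef
  have ht1 : 1 ≤ t := by
    rw [htdef, show (1:ℝ) = Real.sqrt 1 by simp]
    exact Real.sqrt_le_sqrt (le_trans (le_max_left _ _) hD)
  have htδ : C * (S + 1) / δ ≤ t := by
    have h1 : Real.sqrt ((C * (S + 1) / δ) ^ 2) ≤ t :=
      Real.sqrt_le_sqrt (le_trans (le_max_right _ _) hD)
    rwa [Real.sqrt_sq (by positivity)] at h1
  have ht0 : 0 < t := lt_of_lt_of_le one_pos ht1
  -- the subtype summable bound
  have hbound : Summable (fun ν : {ν : Fin d → ℤ // ν ≠ 0} => C / t * G ν.1) := by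
    exact ((hGsum.subtype _).mul_left _)
  apply ciSup_le
  intro x
  have hterm : ∀ ν : {ν : Fin d → ℤ // ν ≠ 0},
      ‖fourierOf d (⇑ψ) (gridPt d t ν.1) *
        Complex.exp ((2 * Real.pi * Complex.I) * ((∑ i, x i * (ν.1 i : ℝ) : ℝ) : ℂ))‖ ≤
      C / t * G ν.1 := by
    intro ν
    rw [norm_mul, norm_exp_I, mul_one, fourier_eq]
    exact hC t ht1 ν.1 ν.2
  have hnormsum : Summable (fun ν : {ν : Fin d → ℤ // ν ≠ 0} =>
      ‖fourierOf d (⇑ψ) (gridPt d t ν.1) *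
        Complex.exp ((2 * Real.pi * Complex.I) * ((∑ i, x i * (ν.1 i : ℝ) : ℝ) : ℂ))‖) :=
    Summable.of_nonneg_of_le (fun ν => norm_nonneg _) hterm hbound
  calc ‖∑' ν : {ν : Fin d → ℤ // ν ≠ 0},
        fourierOf d (⇑ψ) (gridPt d t ν.1) *
          Complex.exp ((2 * Real.pi * Complex.I) * ((∑ i, x i * (ν.1 i : ℝ) : ℝ) : ℂ))‖
      ≤ ∑' ν : {ν : Fin d → ℤ // ν ≠ 0},
        ‖fourierOf d (⇑ψ) (gridPt d t ν.1) *
          Complex.exp ((2 * Real.pi * Complex.I) * ((∑ i, x i * (ν.1 i : ℝ) : ℝ) : ℂ))‖ :=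
        norm_tsum_le_tsum_norm hnormsum
    _ ≤ ∑' ν : {ν : Fin d → ℤ // ν ≠ 0}, C / t * G ν.1 := Summable.tsum_le_tsum hterm hnormsum hbound
    _ = C / t * ∑' ν : {ν : Fin d → ℤ // ν ≠ 0}, G ν.1 := tsum_mul_left
    _ ≤ C / t * S := by
        refine mul_le_mul_of_nonneg_left ?_ (by positivity)
        refine (hGsum.subtype _).tsum_le_tsum_of_inj (fun ν => ν.1) Subtype.coe_injective
          (fun c _ => hG0 c) (fun b => le_refl _) hGsum
    _ ≤ δ := by
        rw [div_mul_eq_mul_div, div_le_iff₀ ht0]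
        have h2 : C * (S + 1) ≤ δ * t := by
          have := mul_le_mul_of_nonneg_left htδ (le_of_lt hδ)
          rwa [mul_div_cancel₀ _ (ne_of_gt hδ)] at this
        nlinarith
end

section
/- Let f : ℝ^d → ℝ be bounded and Lipschitz with rank L₀ with respect to the Euclidean norm. Then for every ε > 0 there exist a function ψ ∈ 𝒮(ℝ^d) (Schwartz space) satisfying the moment condition of some order M ≥ 1, and a triple (h, D, r₀) ∈ (0,∞)³, such that the truncated quasi-interpolant f̂(x) := D^{−d/2} Σ_{m ∈ ℤ^d, ‖mh − x‖₂ ≤ r₀ h} f(mh) ψ((x − mh)/(h√D)) satisfies |f(x) − f̂(x)| ≤ ε for every x ∈ ℝ^d. -/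
open Real MeasureTheory

noncomputable def phi1 (t : ℝ) : ℝ := Real.smoothTransition (t + 1) - Real.smoothTransition t

lemma phi1_nonneg (t : ℝ) : 0 ≤ phi1 t := by
  unfold phi1
  rcases le_or_gt t 0 with h | h
  · rw [Real.smoothTransition.zero_of_nonpos h]
    simpa using Real.smoothTransition.nonneg (t + 1)
  · rw [Real.smoothTransition.one_of_one_le (by linarith)]
    simpa using Real.smoothTransition.le_one t

lemma phi1_zero_of_le (t : ℝ) (h : t ≤ -1) : phi1 t = 0 := by
  unfold phi1
  rw [Real.smoothTransition.zero_of_nonpos (by linarith),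
    Real.smoothTransition.zero_of_nonpos (by linarith), sub_zero]

lemma phi1_zero_of_ge (t : ℝ) (h : 1 ≤ t) : phi1 t = 0 := by
  unfold phi1
  rw [Real.smoothTransition.one_of_one_le (by linarith),
    Real.smoothTransition.one_of_one_le (by linarith), sub_self]

lemma phi1_contDiff : ContDiff ℝ ((⊤ : ℕ∞) : WithTop ℕ∞) phi1 := by
  unfold phi1
  have h1 : ContDiff ℝ ((⊤ : ℕ∞) : WithTop ℕ∞) (fun t : ℝ => Real.smoothTransition (t + 1)) :=
    Real.smoothTransition.contDiff.comp (contDiff_id.add contDiff_const)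
  exact h1.sub Real.smoothTransition.contDiff

lemma phi1_pair_sum (t : ℝ) : phi1 (t - ⌊t⌋) + phi1 (t - (⌊t⌋ + 1)) = 1 := by
  have h1 : (⌊t⌋ : ℝ) ≤ t := Int.floor_le t
  have h2 : t < ⌊t⌋ + 1 := Int.lt_floor_add_one t
  have e1 : Real.smoothTransition (t - ⌊t⌋ + 1) = 1 :=
    Real.smoothTransition.one_of_one_le (by linarith)
  have e3 : Real.smoothTransition (t - ((⌊t⌋ : ℝ) + 1)) = 0 :=
    Real.smoothTransition.zero_of_nonpos (by linarith)
  unfold phi1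
  rw [show t - ((⌊t⌋ : ℝ) + 1) + 1 = t - ⌊t⌋ by ring, e1, e3]
  ring

lemma phi1_vanish (t : ℝ) (k : ℤ) (hk : k ≠ ⌊t⌋) (hk' : k ≠ ⌊t⌋ + 1) : phi1 (t - k) = 0 := by
  have h1 : (⌊t⌋ : ℝ) ≤ t := Int.floor_le t
  have h2 : t < ⌊t⌋ + 1 := Int.lt_floor_add_one t
  rcases lt_or_gt_of_ne hk with h | h
  · have : k ≤ ⌊t⌋ - 1 := by omega
    have : (k : ℝ) ≤ (⌊t⌋ : ℝ) - 1 := by exact_mod_cast this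
    exact phi1_zero_of_ge _ (by linarith)
  · have : ⌊t⌋ + 2 ≤ k := by omega
    have : (⌊t⌋ : ℝ) + 2 ≤ (k : ℝ) := by exact_mod_cast this
    exact phi1_zero_of_le _ (by linarith)

lemma phi1_integral : ∫ t : ℝ, phi1 t = 1 := by
  have hc : Continuous phi1 := phi1_contDiff.continuous
  have hsupp : Function.support phi1 ⊆ Set.Ioc (-1 : ℝ) 1 := by
    intro t ht
    simp only [Function.mem_support] at ht
    constructor
    · by_contra h; exact ht (phi1_zero_of_le t (by linarith))
    · by_contra h; exact ht (phi1_zero_of_ge t (by linarith))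
  rw [← MeasureTheory.setIntegral_eq_integral_of_forall_compl_eq_zero
    (fun t ht => Function.notMem_support.mp fun hs => ht (hsupp hs)),
    ← intervalIntegral.integral_of_le (by norm_num : (-1:ℝ) ≤ 1)]
  have hg : Continuous Real.smoothTransition := Real.smoothTransition.continuous
  have hI1 : IntervalIntegrable (fun t => Real.smoothTransition (t + 1)) volume (-1) 1 :=
    (hg.comp (continuous_id.add continuous_const)).intervalIntegrable _ _
  have hI2 : IntervalIntegrable Real.smoothTransition volume (-1) 1 :=
    hg.intervalIntegrable _ _
  have : ∫ t in (-1:ℝ)..1, phi1 t =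
      (∫ t in (-1:ℝ)..1, Real.smoothTransition (t + 1)) -
        ∫ t in (-1:ℝ)..1, Real.smoothTransition t :=
    intervalIntegral.integral_sub hI1 hI2
  rw [this, intervalIntegral.integral_comp_add_right _ 1,
    show (-1:ℝ) + 1 = 0 by norm_num, show (1:ℝ) + 1 = 2 by norm_num]
  rw [← intervalIntegral.integral_add_adjacent_intervals
      (hg.intervalIntegrable 0 1) (hg.intervalIntegrable 1 2),
    ← intervalIntegral.integral_add_adjacent_intervals
      (hg.intervalIntegrable (-1) 0) (hg.intervalIntegrable 0 1)]
  have e1 : ∫ t in (1:ℝ)..2, Real.smoothTransition t = 1 := by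
    rw [intervalIntegral.integral_congr (g := fun _ => (1:ℝ))
      (fun t ht => by
        rw [Set.uIcc_of_le (by norm_num : (1:ℝ) ≤ 2)] at ht
        exact Real.smoothTransition.one_of_one_le ht.1)]
    norm_num
  have e2 : ∫ t in (-1:ℝ)..0, Real.smoothTransition t = 0 := by
    rw [intervalIntegral.integral_congr (g := fun _ => (0:ℝ))
      (fun t ht => by
        rw [Set.uIcc_of_le (by norm_num : (-1:ℝ) ≤ 0)] at ht
        exact Real.smoothTransition.zero_of_nonpos ht.2)]
    simp
  rw [e1, e2]
  ring

noncomputable def psi0 (d : ℕ) (y : EuclideanSpace ℝ (Fin d)) : ℝ := ∏ i, phi1 (y i)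

lemma psi0_contDiff (d : ℕ) : ContDiff ℝ ((⊤ : ℕ∞) : WithTop ℕ∞) (psi0 d) := by
  unfold psi0
  exact contDiff_prod fun i _ => phi1_contDiff.comp (EuclideanSpace.proj (𝕜 := ℝ) i).contDiff

lemma psi0_nonneg (d : ℕ) (y : EuclideanSpace ℝ (Fin d)) : 0 ≤ psi0 d y :=
  Finset.prod_nonneg fun i _ => phi1_nonneg _

lemma psi0_coord (d : ℕ) (y : EuclideanSpace ℝ (Fin d)) (hy : psi0 d y ≠ 0) (i : Fin d) :
    |y i| < 1 := by
  have h := Finset.prod_ne_zero_iff.mp hy i (Finset.mem_univ i)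
  by_contra hc
  push_neg at hc
  rcases le_abs.mp hc with h1 | h1
  · exact h (phi1_zero_of_ge _ h1)
  · exact h (phi1_zero_of_le _ (by linarith))

lemma psi0_norm_support (d : ℕ) (y : EuclideanSpace ℝ (Fin d)) (hy : psi0 d y ≠ 0) :
    ‖y‖ ≤ Real.sqrt d := by
  rw [EuclideanSpace.norm_eq]
  apply Real.sqrt_le_sqrt
  calc ∑ i, ‖y i‖ ^ 2 ≤ ∑ _i : Fin d, 1 := by
        refine Finset.sum_le_sum fun i _ => ?_
        have := (psi0_coord d y hy i).le
        rw [Real.norm_eq_abs]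
        nlinarith [abs_nonneg (y i)]
    _ = d := by simp

lemma psi0_hasCompactSupport (d : ℕ) : HasCompactSupport (psi0 d) := by
  apply HasCompactSupport.intro (isCompact_closedBall (0 : EuclideanSpace ℝ (Fin d)) (Real.sqrt d))
  intro y hy
  by_contra h
  exact hy (Metric.mem_closedBall.mpr (by simpa using psi0_norm_support d y h))

noncomputable def psiS (d : ℕ) : SchwartzMap (EuclideanSpace ℝ (Fin d)) ℝ where
  toFun := psi0 d
  smooth' := psi0_contDiff d
  decay' := by
    intro k n
    have hcs : HasCompactSupport fun x : EuclideanSpace ℝ (Fin d) =>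
        ‖x‖ ^ k * ‖iteratedFDeriv ℝ n (psi0 d) x‖ := by
      apply HasCompactSupport.mul_left
      exact ((psi0_hasCompactSupport d).iteratedFDeriv n).norm
    have hcont : Continuous fun x : EuclideanSpace ℝ (Fin d) =>
        ‖x‖ ^ k * ‖iteratedFDeriv ℝ n (psi0 d) x‖ :=
      (continuous_norm.pow k).mul
        ((psi0_contDiff d).continuous_iteratedFDeriv (by exact_mod_cast le_top)).norm
    obtain ⟨C, hC⟩ := hcont.bounded_above_of_compact_support hcs
    exact ⟨C, fun x => le_trans (le_abs_self _) (hC x)⟩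

@[simp] lemma psiS_apply (d : ℕ) (y : EuclideanSpace ℝ (Fin d)) : psiS d y = psi0 d y := rfl

lemma psi0_integral (d : ℕ) : (∫ y : EuclideanSpace ℝ (Fin d), psi0 d y) = 1 := by
  rw [← ((EuclideanSpace.volume_preserving_symm_measurableEquiv_toLp (Fin d)).symm).integral_comp']
  have : ∀ y : Fin d → ℝ,
      psi0 d ((MeasurableEquiv.toLp 2 (Fin d → ℝ)) y) = ∏ i, phi1 (y i) := fun y => rfl
  change (∫ y : Fin d → ℝ, ∏ i, phi1 (y i) ∂(Measure.pi fun _ => volume)) = 1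
  rw [MeasureTheory.integral_fintype_prod_eq_prod (f := fun _ : Fin d => phi1)]
  simp [phi1_integral]

lemma phi1_abs_lt (t : ℝ) (ht : phi1 t ≠ 0) : |t| < 1 := by
  by_contra hc
  push_neg at hc
  rcases le_abs.mp hc with h1 | h1
  · exact ht (phi1_zero_of_ge _ h1)
  · exact ht (phi1_zero_of_le _ (by linarith))

lemma gridPt_apply (d : ℕ) (h : ℝ) (m : Fin d → ℤ) (i : Fin d) :
    gridPt d h m i = (m i : ℝ) * h := rfl

lemma psi_arg_eq (d : ℕ) (h : ℝ) (hh : h ≠ 0) (x : EuclideanSpace ℝ (Fin d))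
    (m : Fin d → ℤ) :
    psi0 d (h⁻¹ • (x - gridPt d h m)) = ∏ i, phi1 (x i / h - m i) := by
  unfold psi0
  refine Finset.prod_congr rfl fun i _ => ?_
  have harg : (h⁻¹ • (x - gridPt d h m)) i = x i / h - m i := by
    have h2 : (h⁻¹ • (x - gridPt d h m)) i = h⁻¹ * (x i - (m i : ℝ) * h) := rfl
    rw [h2]; field_simp
  rw [harg]

lemma norm_bound (d : ℕ) (h : ℝ) (hh : 0 < h) (x : EuclideanSpace ℝ (Fin d))
    (m : Fin d → ℤ) (hm : ∀ i, |(m i : ℝ) * h - x i| ≤ h) :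
    ‖gridPt d h m - x‖ ≤ Real.sqrt d * h := by
  rw [EuclideanSpace.norm_eq]
  have h1 : ∑ i, ‖(gridPt d h m - x) i‖ ^ 2 ≤ (d : ℝ) * h ^ 2 := by
    calc ∑ i, ‖(gridPt d h m - x) i‖ ^ 2 ≤ ∑ _i : Fin d, h ^ 2 := by
          refine Finset.sum_le_sum fun i _ => ?_
          have h2 : (gridPt d h m - x) i = (m i : ℝ) * h - x i := rfl
          rw [h2, Real.norm_eq_abs]
          have := hm i
          nlinarith [abs_nonneg ((m i : ℝ) * h - x i)]
      _ = (d : ℝ) * h ^ 2 := by simp [mul_comm]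
  calc Real.sqrt (∑ i, ‖(gridPt d h m - x) i‖ ^ 2) ≤ Real.sqrt ((d : ℝ) * h ^ 2) :=
        Real.sqrt_le_sqrt h1
    _ = Real.sqrt d * h := by
        rw [Real.sqrt_mul (by positivity), Real.sqrt_sq hh.le]

lemma key_estimate (d : ℕ) (f : EuclideanSpace ℝ (Fin d) → ℝ)
    (L₀ : ℝ) (hL₀ : 0 ≤ L₀) (hfLip : ∀ x y, |f x - f y| ≤ L₀ * ‖x - y‖)
    (h : ℝ) (hh : 0 < h) (x : EuclideanSpace ℝ (Fin d)) :
    |f x - (1:ℝ) ^ (-(d : ℝ) / 2) *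
        ∑' m : {m : Fin d → ℤ // ‖gridPt d h m - x‖ ≤ Real.sqrt d * h},
          f (gridPt d h m.1) * psiS d ((h * Real.sqrt 1)⁻¹ • (x - gridPt d h m.1))| ≤
      L₀ * (Real.sqrt d * h) := by
  have hh0 : h ≠ 0 := hh.ne'
  simp only [Real.sqrt_one, mul_one, Real.one_rpow, one_mul, psiS_apply]
  set W : (Fin d → ℤ) → ℝ := fun m => ∏ i, phi1 (x i / h - m i) with hWdef
  set G : (Fin d → ℤ) → ℝ := fun m => f (gridPt d h m) * psi0 d (h⁻¹ • (x - gridPt d h m))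
    with hGdef
  have hGW : ∀ m, G m = f (gridPt d h m) * W m := fun m => by
    rw [hGdef, hWdef]; simp only [psi_arg_eq d h hh0 x m]
  have hWnn : ∀ m, 0 ≤ W m := fun m => Finset.prod_nonneg fun i _ => phi1_nonneg _
  set a : Fin d → ℤ := fun i => ⌊x i / h⌋ with hadef
  set S : Finset (Fin d → ℤ) := Fintype.piFinset fun i => ({a i, a i + 1} : Finset ℤ)
    with hSdef
  have hW0 : ∀ m ∉ S, W m = 0 := by
    intro m hm
    rw [hSdef, Fintype.mem_piFinset] at hm
    push_neg at hm
    obtain ⟨i, hi⟩ := hm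
    simp only [Finset.mem_insert, Finset.mem_singleton, not_or] at hi
    exact Finset.prod_eq_zero (Finset.mem_univ i) (phi1_vanish _ _ hi.1 hi.2)
  have hWsum : ∑ m ∈ S, W m = 1 := by
    have h1 : (∏ i, ∑ j ∈ ({a i, a i + 1} : Finset ℤ), phi1 (x i / h - (j : ℝ))) =
        ∑ m ∈ S, W m := Finset.prod_univ_sum _ _
    rw [← h1, Finset.prod_eq_one]
    intro i _
    rw [Finset.sum_pair (by omega : a i ≠ a i + 1)]
    push_cast
    exact phi1_pair_sum (x i / h)
  -- coordinate bound for m in S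
  have hcoordS : ∀ m ∈ S, ∀ i, |(m i : ℝ) * h - x i| ≤ h := by
    intro m hm i
    rw [hSdef, Fintype.mem_piFinset] at hm
    have hfl : (a i : ℝ) ≤ x i / h := Int.floor_le _
    have hfu : x i / h < a i + 1 := Int.lt_floor_add_one _
    have hb : |(m i : ℝ) - x i / h| ≤ 1 := by
      rcases Finset.mem_insert.mp (hm i) with he | he
      · rw [he]; rw [abs_le]; constructor <;> linarith
      · rw [Finset.mem_singleton.mp he]; push_cast; rw [abs_le]; constructor <;> linarith
    have : (m i : ℝ) * h - x i = ((m i : ℝ) - x i / h) * h := by field_simp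
    rw [this, abs_mul, abs_of_pos hh]
    nlinarith
  have hcoordW : ∀ m : Fin d → ℤ, W m ≠ 0 → ∀ i, |(m i : ℝ) * h - x i| ≤ h := by
    intro m hm i
    have hfac := Finset.prod_ne_zero_iff.mp hm i (Finset.mem_univ i)
    have hb := (phi1_abs_lt _ hfac).le
    have : (m i : ℝ) * h - x i = -((x i / h - m i) * h) := by field_simp; ring
    rw [this, abs_neg, abs_mul, abs_of_pos hh]
    nlinarith
  -- tsum over subtype = finite sum over S
  have hsub : (∑' m : {m : Fin d → ℤ // ‖gridPt d h m - x‖ ≤ Real.sqrt d * h}, G m.1) =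
      ∑ m ∈ S, G m := by
    have hind : Set.indicator {m : Fin d → ℤ | ‖gridPt d h m - x‖ ≤ Real.sqrt d * h} G = G := by
      apply Set.indicator_eq_self.mpr
      intro m hm
      have hWm : W m ≠ 0 := by
        intro hW
        apply hm
        rw [hGW m, hW, mul_zero]
      exact norm_bound d h hh x m (hcoordW m hWm)
    calc (∑' m : {m : Fin d → ℤ // ‖gridPt d h m - x‖ ≤ Real.sqrt d * h}, G m.1)
        = ∑' m : Fin d → ℤ,
            Set.indicator {m : Fin d → ℤ | ‖gridPt d h m - x‖ ≤ Real.sqrt d * h} G m :=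
          tsum_subtype _ G
      _ = ∑' m : Fin d → ℤ, G m := by rw [hind]
      _ = ∑ m ∈ S, G m := tsum_eq_sum fun m hm => by rw [hGW m, hW0 m hm, mul_zero]
  rw [hsub]
  have hfx : f x = ∑ m ∈ S, f x * W m := by rw [← Finset.mul_sum, hWsum, mul_one]
  have hstep : f x - ∑ m ∈ S, G m = ∑ m ∈ S, (f x - f (gridPt d h m)) * W m := by
    have h3 : ∑ m ∈ S, (f x - f (gridPt d h m)) * W m
        = (∑ m ∈ S, f x * W m) - ∑ m ∈ S, G m := by
      rw [← Finset.sum_sub_distrib]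
      exact Finset.sum_congr rfl fun m _ => by rw [hGW m]; ring
    rw [h3, ← hfx]
  rw [hstep]
  calc |∑ m ∈ S, (f x - f (gridPt d h m)) * W m|
      ≤ ∑ m ∈ S, |(f x - f (gridPt d h m)) * W m| := Finset.abs_sum_le_sum_abs _ _
    _ ≤ ∑ m ∈ S, L₀ * (Real.sqrt d * h) * W m := by
        refine Finset.sum_le_sum fun m hm => ?_
        rw [abs_mul, abs_of_nonneg (hWnn m)]
        refine mul_le_mul_of_nonneg_right ?_ (hWnn m)
        calc |f x - f (gridPt d h m)| ≤ L₀ * ‖x - gridPt d h m‖ := hfLip _ _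
          _ = L₀ * ‖gridPt d h m - x‖ := by rw [norm_sub_rev]
          _ ≤ L₀ * (Real.sqrt d * h) :=
            mul_le_mul_of_nonneg_left (norm_bound d h hh x m (hcoordS m hm)) hL₀
    _ = L₀ * (Real.sqrt d * h) := by rw [← Finset.mul_sum, hWsum, mul_one]


/-- **Uniform approximation by truncated quasi-interpolants.**  Let `f : ℝ^d → ℝ` be
bounded and Lipschitz of rank `L₀` (Euclidean norm).  Then for every `ε > 0` there exist a
Schwartz function `ψ` satisfying the moment condition of some order `M ≥ 1` and parameters
`(h, D, r₀) ∈ (0,∞)³` such that the truncated quasi-interpolant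
`f̂(x) = D^{−d/2} ∑_{m ∈ ℤ^d, ‖mh−x‖₂ ≤ r₀ h} f(mh) ψ((x − mh)/(h√D))` satisfies
`|f(x) − f̂(x)| ≤ ε` for every `x ∈ ℝ^d`. -/
theorem truncated_quasiInterp_uniform_approx (d : ℕ) (hd : 1 ≤ d)
    (f : EuclideanSpace ℝ (Fin d) → ℝ) (Cf : ℝ) (hfbdd : ∀ x, |f x| ≤ Cf)
    (L₀ : ℝ) (hL₀ : 0 ≤ L₀) (hfLip : ∀ x y, |f x - f y| ≤ L₀ * ‖x - y‖) :
    ∀ ε > (0 : ℝ), ∃ (ψ : SchwartzMap (EuclideanSpace ℝ (Fin d)) ℝ) (M : ℕ),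
      1 ≤ M ∧ MomentCondition d (⇑ψ) M ∧
      ∃ h D r₀ : ℝ, 0 < h ∧ 0 < D ∧ 0 < r₀ ∧
        ∀ x : EuclideanSpace ℝ (Fin d),
          |f x - D ^ (-(d : ℝ) / 2) *
              ∑' m : {m : Fin d → ℤ // ‖gridPt d h m - x‖ ≤ r₀ * h},
                f (gridPt d h m.1) * ψ ((h * Real.sqrt D)⁻¹ • (x - gridPt d h m.1))| ≤ ε := by
  intro ε hε
  have hden : (0 : ℝ) < L₀ * Real.sqrt d + 1 := by positivity
  have hdpos : (0 : ℝ) < Real.sqrt d := Real.sqrt_pos.mpr (by exact_mod_cast hd)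
  refine ⟨psiS d, 1, le_refl 1, ⟨psi0_integral d, fun α h1 h2 => by omega⟩,
    ε / (L₀ * Real.sqrt d + 1), 1, Real.sqrt d, div_pos hε hden, one_pos, hdpos, fun x => ?_⟩
  refine le_trans (key_estimate d f L₀ hL₀ hfLip _ (div_pos hε hden) x) ?_
  have heq : L₀ * (Real.sqrt d * (ε / (L₀ * Real.sqrt d + 1))) =
      L₀ * Real.sqrt d * ε / (L₀ * Real.sqrt d + 1) := by ring
  rw [heq, div_le_iff₀ hden]
  nlinarith [mul_nonneg hL₀ hdpos.le, hε.le]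
end

section
/- Let d ≥ 1 and let f : [0,1]^d → ℝ be Lipschitz with rank L₀ with respect to the Euclidean norm. Then for every ε > 0 and every fixed integer W₀ ≥ 3^{d+4}·d, there exist an integer L ≥ 29 + 2d and a function f̂ realized by a ReLU network of width W₀ and depth L such that sup_{x ∈ [0,1]^d} |f(x) − f̂(x)| ≤ ε. -/
open Matrix

/-- An affine map `x ↦ M x + c` between finite-dimensional coordinate spaces. -/
def IsAffineMapR (a b : ℕ) (f : (Fin a → ℝ) → (Fin b → ℝ)) : Prop :=
  ∃ (M : Matrix (Fin b) (Fin a) ℝ) (c : Fin b → ℝ), ∀ x, f x = M *ᵥ x + c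

/-- The coordinatewise ReLU activation `σ(x)_i = max (x_i) 0`. -/
def reluVec (k : ℕ) (x : Fin k → ℝ) : Fin k → ℝ := fun i => max (x i) 0

/-- `RealizedBy Wd L a b f` : the function `f : ℝ^a → ℝ^b` is realized by a ReLU network
with exactly `L` applications of the activation `σ`, every intermediate dimension at most
`Wd`, i.e. `f = A_L ∘ σ ∘ A_{L−1} ∘ σ ∘ ⋯ ∘ σ ∘ A_0` with all `A_j` affine. -/
def RealizedBy (Wd : ℕ) : (L : ℕ) → (a b : ℕ) → ((Fin a → ℝ) → (Fin b → ℝ)) → Prop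
  | 0, a, b, f => IsAffineMapR a b f
  | L + 1, a, b, f =>
    ∃ (k : ℕ) (g : (Fin a → ℝ) → (Fin k → ℝ)) (Aff : (Fin k → ℝ) → (Fin b → ℝ)),
      k ≤ Wd ∧ RealizedBy Wd L a k g ∧ IsAffineMapR k b Aff ∧
        f = fun x => Aff (reluVec k (g x))

/-- The Euclidean distance on `ℝ^d` viewed as coordinate functions. -/
noncomputable def eudist (d : ℕ) (x y : Fin d → ℝ) : ℝ :=
  Real.sqrt (∑ i, (x i - y i) ^ 2)

/-- The modulus of continuity of `f` on the unit cube `[0,1]^d` w.r.t. the Euclidean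
norm: `ω_f(r) = sup {|f x − f y| : x, y ∈ [0,1]^d, ‖x − y‖₂ ≤ r}`. -/
noncomputable def modCont (d : ℕ) (f : (Fin d → ℝ) → ℝ) (r : ℝ) : ℝ :=
  sSup {t : ℝ | ∃ x ∈ Set.Icc (0 : Fin d → ℝ) 1, ∃ y ∈ Set.Icc (0 : Fin d → ℝ) 1,
    eudist d x y ≤ r ∧ t = |f x - f y|}

-- basic lemmas
lemma isAffineMapR_rows {a b : ℕ} (W : Fin b → Fin a → ℝ) (c : Fin b → ℝ) :
    IsAffineMapR a b (fun x i => (∑ j, W i j * x j) + c i) := by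
  refine ⟨Matrix.of W, c, fun x => ?_⟩
  funext i
  simp [Matrix.mulVec, dotProduct]

lemma isAffineMapR_congr {a b : ℕ} {f g : (Fin a → ℝ) → (Fin b → ℝ)}
    (h : ∀ x, f x = g x) (hg : IsAffineMapR a b g) : IsAffineMapR a b f := by
  obtain ⟨M, c, hM⟩ := hg
  exact ⟨M, c, fun x => (h x).trans (hM x)⟩

lemma isAffineMapR_id (a : ℕ) : IsAffineMapR a a id := by
  refine ⟨1, 0, fun x => by simp [Matrix.one_mulVec]⟩

lemma isAffineMapR_comp {a b c : ℕ} {f : (Fin a → ℝ) → (Fin b → ℝ)}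
    {g : (Fin b → ℝ) → (Fin c → ℝ)} (hf : IsAffineMapR a b f) (hg : IsAffineMapR b c g) :
    IsAffineMapR a c (fun x => g (f x)) := by
  obtain ⟨M, cf, hM⟩ := hf
  obtain ⟨N, cg, hN⟩ := hg
  refine ⟨N * M, N *ᵥ cf + cg, fun x => ?_⟩
  show g (f x) = _
  rw [hN, hM, Matrix.mulVec_add, Matrix.mulVec_mulVec, add_assoc]

lemma realizedBy_zero {Wd a b : ℕ} {f} (h : IsAffineMapR a b f) : RealizedBy Wd 0 a b f := h

lemma realizedBy_affine_comp {Wd L a b c : ℕ} {f : (Fin a → ℝ) → (Fin b → ℝ)}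
    {g : (Fin b → ℝ) → (Fin c → ℝ)} (hf : RealizedBy Wd L a b f) (hg : IsAffineMapR b c g) :
    RealizedBy Wd L a c (fun x => g (f x)) := by
  induction L generalizing c with
  | zero => exact isAffineMapR_comp hf hg
  | succ L ih =>
    obtain ⟨k, g', Aff, hk, hg', hAff, rfl⟩ := hf
    exact ⟨k, g', fun y => g (Aff y), hk, hg', isAffineMapR_comp hAff hg, rfl⟩

lemma realizedBy_comp {Wd L₁ L₂ a b c : ℕ} {f : (Fin a → ℝ) → (Fin b → ℝ)}
    {g : (Fin b → ℝ) → (Fin c → ℝ)} (hf : RealizedBy Wd L₁ a b f)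
    (hg : RealizedBy Wd L₂ b c g) :
    RealizedBy Wd (L₂ + L₁) a c (fun x => g (f x)) := by
  induction L₂ generalizing c with
  | zero => simpa using realizedBy_affine_comp hf hg
  | succ L ih =>
    obtain ⟨k, g', Aff, hk, hg', hAff, rfl⟩ := hg
    rw [show L + 1 + L₁ = L + L₁ + 1 from by omega]
    exact ⟨k, fun x => g' (f x), Aff, hk, ih hg', hAff, rfl⟩

lemma realizedBy_two_layer {Wd a b k₁ k₂ : ℕ}
    {A₀ : (Fin a → ℝ) → (Fin k₁ → ℝ)} {A₁ : (Fin k₁ → ℝ) → (Fin k₂ → ℝ)}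
    {A₂ : (Fin k₂ → ℝ) → (Fin b → ℝ)}
    (h₁ : k₁ ≤ Wd) (h₂ : k₂ ≤ Wd)
    (hA₀ : IsAffineMapR a k₁ A₀) (hA₁ : IsAffineMapR k₁ k₂ A₁) (hA₂ : IsAffineMapR k₂ b A₂) :
    RealizedBy Wd 2 a b (fun x => A₂ (reluVec k₂ (A₁ (reluVec k₁ (A₀ x))))) :=
  ⟨k₂, fun x => A₁ (reluVec k₁ (A₀ x)), A₂, h₂,
    ⟨k₁, A₀, A₁, h₁, hA₀, hA₁, rfl⟩, hA₂, rfl⟩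

lemma isAffineMapR_append {a b b' : ℕ} {f : (Fin a → ℝ) → (Fin b → ℝ)}
    {g : (Fin a → ℝ) → (Fin b' → ℝ)} (hf : IsAffineMapR a b f) (hg : IsAffineMapR a b' g) :
    IsAffineMapR a (b + b') (fun x => Fin.append (f x) (g x)) := by
  obtain ⟨M, cf, hM⟩ := hf
  obtain ⟨N, cg, hN⟩ := hg
  refine ⟨Matrix.of (fun i j => Fin.addCases (fun i1 => M i1 j) (fun i2 => N i2 j) i),
    Fin.append cf cg, fun x => ?_⟩
  funext i
  refine Fin.addCases (fun i1 => ?_) (fun i2 => ?_) i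
  · simp [Matrix.mulVec, dotProduct, Fin.append_left, hM]
  · simp [Matrix.mulVec, dotProduct, Fin.append_right, hN]

lemma reluVec_append {a b : ℕ} (u : Fin a → ℝ) (v : Fin b → ℝ) :
    reluVec (a + b) (Fin.append u v) = Fin.append (reluVec a u) (reluVec b v) := by
  funext i
  refine Fin.addCases (fun i1 => ?_) (fun i2 => ?_) i
  · simp [reluVec, Fin.append_left]
  · simp [reluVec, Fin.append_right]

/-- two-selection affine map -/
lemma isAffineMapR_sel2 {a b : ℕ} (e e' : Fin b → ℝ) (φ ψ : Fin b → Fin a) (c : Fin b → ℝ) :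
    IsAffineMapR a b (fun x i => e i * x (φ i) + e' i * x (ψ i) + c i) := by
  refine isAffineMapR_congr (g := fun x i =>
      (∑ j, ((if j = φ i then e i else 0) + (if j = ψ i then e' i else 0)) * x j) + c i)
    (fun x => ?_) (isAffineMapR_rows _ _)
  funext i
  have h1 : (∑ j, (if j = φ i then e i else 0) * x j) = e i * x (φ i) := by
    rw [Finset.sum_eq_single (φ i)]
    · simp
    · intro j _ hj; simp [hj]
    · simp
  have h2 : (∑ j, (if j = ψ i then e' i else 0) * x j) = e' i * x (ψ i) := by
    rw [Finset.sum_eq_single (ψ i)]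
    · simp
    · intro j _ hj; simp [hj]
    · simp
  simp only [add_mul, Finset.sum_add_distrib, h1, h2]

-- scalar ReLU identities
lemma relu_sub (t : ℝ) : max t 0 - max (-t) 0 = t := by
  rcases le_total t 0 with h | h
  · rw [max_eq_right h, max_eq_left (by linarith)]; ring
  · rw [max_eq_left h, max_eq_right (by linarith)]; ring

lemma relu_add (t : ℝ) : max t 0 + max (-t) 0 = |t| := by
  rcases le_total t 0 with h | h
  · rw [max_eq_right h, max_eq_left (by linarith), abs_of_nonpos h]; ring
  · rw [max_eq_left h, max_eq_right (by linarith), abs_of_nonneg h]; ring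

lemma relu_min (a b : ℝ) : a - max (a - b) 0 = min b a := by
  rcases le_total a b with h | h
  · rw [max_eq_right (by linarith), min_eq_right h]; ring
  · rw [max_eq_left (by linarith), min_eq_left h]; ring

lemma sum_single_mul {n : ℕ} (t : Fin n) (e : ℝ) (x : Fin n → ℝ) :
    (∑ j, (if j = t then e else 0) * x j) = e * x t := by
  rw [Finset.sum_eq_single t]
  · simp
  · intro j _ hj; simp [hj]
  · simp

-- index helpers
def jA {d : ℕ} (i : Fin d) : Fin (d + d + 2) := Fin.castAdd 2 (Fin.castAdd d i)
def jB {d : ℕ} (i : Fin d) : Fin (d + d + 2) := Fin.castAdd 2 (Fin.natAdd d i)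
def jR0 (d : ℕ) : Fin (d + d + 2) := Fin.natAdd (d + d) 0
def jR1 (d : ℕ) : Fin (d + d + 2) := Fin.natAdd (d + d) 1
def kA {d : ℕ} (i : Fin d) : Fin (d + d + 3) := Fin.castAdd 3 (Fin.castAdd d i)
def kB {d : ℕ} (i : Fin d) : Fin (d + d + 3) := Fin.castAdd 3 (Fin.natAdd d i)
def kH0 (d : ℕ) : Fin (d + d + 3) := Fin.natAdd (d + d) 0
def kH1 (d : ℕ) : Fin (d + d + 3) := Fin.natAdd (d + d) 1
def kH2 (d : ℕ) : Fin (d + d + 3) := Fin.natAdd (d + d) 2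

noncomputable def hAux (d : ℕ) (lam cst : ℝ) (m : Fin d → ℝ) (x : Fin d → ℝ) : ℝ :=
  cst + lam * ∑ i, |x i - m i|

def layer0 (d : ℕ) (m : Fin d → ℝ) : (Fin (d + 1) → ℝ) → (Fin (d + d + 2) → ℝ) :=
  fun s => Fin.append (Fin.append (fun i => s (Fin.castAdd 1 i) - m i)
      (fun i => m i - s (Fin.castAdd 1 i)))
    ![s (Fin.natAdd d 0), - s (Fin.natAdd d 0)]

noncomputable def layer1 (d : ℕ) (lam cst : ℝ) : (Fin (d + d + 2) → ℝ) → (Fin (d + d + 3) → ℝ) :=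
  fun u =>
    Fin.append (Fin.append (fun i => u (jA i) - u (jB i)) (fun i => u (jB i) - u (jA i)))
      ![cst + lam * ∑ i, (u (jA i) + u (jB i)),
        -(cst + lam * ∑ i, (u (jA i) + u (jB i))),
        (cst + lam * ∑ i, (u (jA i) + u (jB i))) - (u (jR0 d) - u (jR1 d))]

def layer2 (d : ℕ) (m : Fin d → ℝ) : (Fin (d + d + 3) → ℝ) → (Fin (d + 1) → ℝ) :=
  fun v => Fin.append (fun i => v (kA i) - v (kB i) + m i)
    ![ (v (kH0 d) - v (kH1 d)) - v (kH2 d) ]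

lemma layer0_affine (d : ℕ) (m : Fin d → ℝ) : IsAffineMapR (d + 1) (d + d + 2) (layer0 d m) := by
  apply isAffineMapR_append
  · apply isAffineMapR_append
    · refine isAffineMapR_congr (g := fun x i =>
        (1:ℝ) * x (Fin.castAdd 1 i) + 0 * x (Fin.castAdd 1 i) + (-m i)) ?_
        (isAffineMapR_sel2 _ _ _ _ _)
      intro x; funext i; ring
    · refine isAffineMapR_congr (g := fun x i =>
        (-1:ℝ) * x (Fin.castAdd 1 i) + 0 * x (Fin.castAdd 1 i) + (m i)) ?_
        (isAffineMapR_sel2 _ _ _ _ _)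
      intro x; funext i; ring
  · refine isAffineMapR_congr (g := fun x i =>
      (![1, -1] i) * x (Fin.natAdd d 0) + 0 * x (Fin.natAdd d 0) + 0) ?_
      (isAffineMapR_sel2 _ _ _ _ _)
    intro x; funext i
    fin_cases i <;> simp <;> ring

lemma layer2_affine (d : ℕ) (m : Fin d → ℝ) : IsAffineMapR (d + d + 3) (d + 1) (layer2 d m) := by
  apply isAffineMapR_append
  · exact isAffineMapR_congr (g := fun x i => (1:ℝ) * x (kA i) + (-1) * x (kB i) + m i)
      (by intro x; funext i; ring) (isAffineMapR_sel2 _ _ _ _ _)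
  · refine isAffineMapR_congr (g := fun x i =>
      (∑ j, ((if j = kH0 d then (1:ℝ) else 0) - (if j = kH1 d then 1 else 0)
        - (if j = kH2 d then 1 else 0)) * x j) + 0) ?_ (isAffineMapR_rows _ _)
    intro x; funext i
    fin_cases i
    simp only [sub_mul, Finset.sum_sub_distrib, sum_single_mul]
    simp

lemma layer1_affine (d : ℕ) (lam cst : ℝ) :
    IsAffineMapR (d + d + 2) (d + d + 3) (layer1 d lam cst) := by
  have hwH : ∀ u : Fin (d + d + 2) → ℝ,
      (∑ j, (if (j : Fin (d+d+2)).val < d + d then lam else 0) * u j)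
        = lam * ∑ i, (u (jA i) + u (jB i)) := by
    intro u
    rw [Fin.sum_univ_add (f := fun j : Fin ((d+d)+2) =>
      (if j.val < d + d then lam else 0) * u j)]
    have h2 : (∑ i : Fin 2,
        (if (Fin.natAdd (d+d) i).val < d + d then lam else 0) * u (Fin.natAdd (d+d) i)) = 0 := by
      apply Finset.sum_eq_zero
      intro i _
      have : ¬ (Fin.natAdd (d+d) i).val < d + d := by simp [Fin.natAdd]
      simp [this]
    rw [h2, add_zero]
    have h1 : ∀ z : Fin (d + d),
        (if (Fin.castAdd 2 z).val < d + d then lam else 0) * u (Fin.castAdd 2 z)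
          = lam * u (Fin.castAdd 2 z) := by
      intro z; simp [z.isLt]
    simp only [h1]
    rw [Fin.sum_univ_add (f := fun z : Fin (d + d) => lam * u (Fin.castAdd 2 z))]
    rw [Finset.mul_sum]
    simp only [mul_add]
    rw [Finset.sum_add_distrib]
    rfl
  apply isAffineMapR_append
  · apply isAffineMapR_append
    · exact isAffineMapR_congr (g := fun u i => (1:ℝ) * u (jA i) + (-1) * u (jB i) + 0)
        (by intro u; funext i; ring) (isAffineMapR_sel2 _ _ _ _ _)
    · exact isAffineMapR_congr (g := fun u i => (1:ℝ) * u (jB i) + (-1) * u (jA i) + 0)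
        (by intro u; funext i; ring) (isAffineMapR_sel2 _ _ _ _ _)
  · refine isAffineMapR_congr (g := fun u t =>
      (∑ j, (![ (fun j : Fin (d+d+2) => if j.val < d + d then lam else 0),
               (fun j => -(if j.val < d + d then lam else 0)),
               (fun j => (if j.val < d + d then lam else 0)
                  - (if j = jR0 d then 1 else 0) + (if j = jR1 d then 1 else 0)) ] t j) * u j)
        + ![cst, -cst, cst] t) ?_ (isAffineMapR_rows _ _)
    intro u; funext t
    have h0 := hwH u
    refine Fin.cases ?_ (fun t1 => Fin.cases ?_ (fun t2 => Fin.cases ?_ (fun t3 => t3.elim0) t2) t1) t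
    · simp only [Matrix.cons_val_zero]
      rw [h0]; ring
    · simp only [Matrix.cons_val_succ, Matrix.cons_val_zero, neg_mul,
        Finset.sum_neg_distrib]
      rw [h0]; ring
    · simp only [Matrix.cons_val_succ, Matrix.cons_val_zero, sub_mul, add_mul,
        Finset.sum_sub_distrib, Finset.sum_add_distrib, sum_single_mul]
      rw [h0, Finset.sum_add_distrib]; ring

noncomputable def blockFun (d : ℕ) (lam cst : ℝ) (m : Fin d → ℝ) :
    (Fin (d + 1) → ℝ) → (Fin (d + 1) → ℝ) :=
  fun s => Fin.append (fun i => s (Fin.castAdd 1 i))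
    ![min (s (Fin.natAdd d 0)) (hAux d lam cst m (fun i => s (Fin.castAdd 1 i)))]

lemma relu_roundtrip (t : ℝ) : max (max t 0 - max (-t) 0) 0 - max (max (-t) 0 - max t 0) 0 = t := by
  have h : max (-t) 0 - max t 0 = -(max t 0 - max (-t) 0) := by ring
  rw [h, relu_sub, relu_sub]

lemma blockFun_eq_net (d : ℕ) (lam cst : ℝ) (m : Fin d → ℝ) (s : Fin (d + 1) → ℝ) :
    layer2 d m (reluVec (d + d + 3) (layer1 d lam cst (reluVec (d + d + 2) (layer0 d m s))))
      = blockFun d lam cst m s := by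
  set x : Fin d → ℝ := fun i => s (Fin.castAdd 1 i) with hx
  set r : ℝ := s (Fin.natAdd d 0) with hr
  set u := reluVec (d + d + 2) (layer0 d m s) with hu
  have hujA : ∀ i, u (jA i) = max (x i - m i) 0 := by
    intro i
    show max (Fin.append (Fin.append (fun i => s (Fin.castAdd 1 i) - m i)
        (fun i => m i - s (Fin.castAdd 1 i)))
        ![s (Fin.natAdd d 0), - s (Fin.natAdd d 0)] (Fin.castAdd 2 (Fin.castAdd d i))) 0 = _
    rw [Fin.append_left, Fin.append_left]
  have hujB : ∀ i, u (jB i) = max (-(x i - m i)) 0 := by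
    intro i
    show max (Fin.append (Fin.append (fun i => s (Fin.castAdd 1 i) - m i)
        (fun i => m i - s (Fin.castAdd 1 i)))
        ![s (Fin.natAdd d 0), - s (Fin.natAdd d 0)] (Fin.castAdd 2 (Fin.natAdd d i))) 0 = _
    rw [Fin.append_left, Fin.append_right]
    norm_num
    rfl
  have hujR0 : u (jR0 d) = max r 0 := by
    show max (Fin.append (Fin.append (fun i => s (Fin.castAdd 1 i) - m i)
        (fun i => m i - s (Fin.castAdd 1 i)))
        ![s (Fin.natAdd d 0), - s (Fin.natAdd d 0)] (Fin.natAdd (d + d) 0)) 0 = _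
    rw [Fin.append_right]
    norm_num
    rfl
  have hujR1 : u (jR1 d) = max (-r) 0 := by
    show max (Fin.append (Fin.append (fun i => s (Fin.castAdd 1 i) - m i)
        (fun i => m i - s (Fin.castAdd 1 i)))
        ![s (Fin.natAdd d 0), - s (Fin.natAdd d 0)] (Fin.natAdd (d + d) 1)) 0 = _
    rw [Fin.append_right]
    norm_num
    rfl
  set v := layer1 d lam cst u with hv
  have hH : cst + lam * ∑ i, (u (jA i) + u (jB i)) = hAux d lam cst m x := by
    unfold hAux
    congr 1
    congr 1
    apply Finset.sum_congr rfl
    intro i _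
    rw [hujA, hujB, relu_add]
  have hvkA : ∀ i, v (kA i) = x i - m i := by
    intro i
    show Fin.append _ _ (Fin.castAdd 3 (Fin.castAdd d i)) = _
    rw [Fin.append_left, Fin.append_left]
    simp only [hujA, hujB, relu_sub]
  have hvkB : ∀ i, v (kB i) = -(x i - m i) := by
    intro i
    show Fin.append _ _ (Fin.castAdd 3 (Fin.natAdd d i)) = _
    rw [Fin.append_left, Fin.append_right]
    simp only [hujA, hujB]
    rw [show max (x i - m i) 0 = max (-(-(x i - m i))) 0 by rw [neg_neg], relu_sub]
  have hvkH0 : v (kH0 d) = hAux d lam cst m x := by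
    show Fin.append _ _ (Fin.natAdd (d + d) 0) = _
    rw [Fin.append_right]
    simpa using hH
  have hvkH1 : v (kH1 d) = -(hAux d lam cst m x) := by
    show Fin.append _ _ (Fin.natAdd (d + d) 1) = _
    rw [Fin.append_right]
    show -(cst + lam * ∑ i, (u (jA i) + u (jB i))) = _
    rw [hH]
  have hvkH2 : v (kH2 d) = hAux d lam cst m x - r := by
    show Fin.append _ _ (Fin.natAdd (d + d) 2) = _
    rw [Fin.append_right]
    show (cst + lam * ∑ i, (u (jA i) + u (jB i))) - (u (jR0 d) - u (jR1 d)) = _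
    rw [hH, hujR0, hujR1, relu_sub]
  show Fin.append
      (fun i => (reluVec (d + d + 3) v) (kA i) - (reluVec (d + d + 3) v) (kB i) + m i)
      ![ ((reluVec (d + d + 3) v) (kH0 d) - (reluVec (d + d + 3) v) (kH1 d))
          - (reluVec (d + d + 3) v) (kH2 d) ]
    = Fin.append (fun i => s (Fin.castAdd 1 i)) ![ min r (hAux d lam cst m x) ]
  funext t
  refine Fin.addCases (fun i => ?_) (fun z => ?_) t
  · rw [Fin.append_left, Fin.append_left]
    show max (v (kA i)) 0 - max (v (kB i)) 0 + m i = x i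
    rw [hvkA, hvkB, relu_sub]
    ring
  · rw [Fin.append_right, Fin.append_right]
    fin_cases z
    show (max (v (kH0 d)) 0 - max (v (kH1 d)) 0) - max (v (kH2 d)) 0 = min r (hAux d lam cst m x)
    rw [hvkH0, hvkH1, hvkH2, relu_sub, relu_min]

lemma blockFun_realized {Wd : ℕ} (d : ℕ) (lam cst : ℝ) (m : Fin d → ℝ)
    (hW : d + d + 3 ≤ Wd) :
    RealizedBy Wd 2 (d + 1) (d + 1) (blockFun d lam cst m) := by
  have h := realizedBy_two_layer (Wd := Wd) (by omega : d + d + 2 ≤ Wd) hW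
    (layer0_affine d m) (layer1_affine d lam cst) (layer2_affine d m)
  have : blockFun d lam cst m = fun s =>
      layer2 d m (reluVec (d + d + 3) (layer1 d lam cst (reluVec (d + d + 2) (layer0 d m s)))) := by
    funext s
    rw [blockFun_eq_net]
  rw [this]
  exact h

/-- `min`-fold of hat functions over a list of grid points, with values supplied by `f`. -/
noncomputable def gFold (d : ℕ) (lam : ℝ) (f : (Fin d → ℝ) → ℝ) :
    List (Fin d → ℝ) → ℝ → (Fin d → ℝ) → ℝ
  | [], r, _ => r
  | mm :: t, r, x => gFold d lam f t (min r (hAux d lam (f mm) mm x)) x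

noncomputable def sFold (d : ℕ) (lam : ℝ) (f : (Fin d → ℝ) → ℝ) :
    List (Fin d → ℝ) → (Fin (d + 1) → ℝ) → (Fin (d + 1) → ℝ)
  | [] => id
  | mm :: t => fun s => sFold d lam f t (blockFun d lam (f mm) mm s)

lemma sFold_realized {Wd : ℕ} (d : ℕ) (lam : ℝ) (f : (Fin d → ℝ) → ℝ)
    (hW : d + d + 3 ≤ Wd) (l : List (Fin d → ℝ)) :
    RealizedBy Wd (2 * l.length) (d + 1) (d + 1) (sFold d lam f l) := by
  induction l with
  | nil => exact realizedBy_zero (isAffineMapR_id (d + 1))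
  | cons mm t ih =>
    have h := realizedBy_comp (blockFun_realized d lam (f mm) mm hW) ih
    rw [show (2 * (mm :: t).length) = 2 * t.length + 2 from by simp [List.length_cons]; ring]
    exact h

lemma sFold_eval (d : ℕ) (lam : ℝ) (f : (Fin d → ℝ) → ℝ) (l : List (Fin d → ℝ))
    (x : Fin d → ℝ) (r : ℝ) :
    sFold d lam f l (Fin.append x ![r]) = Fin.append x ![gFold d lam f l r x] := by
  induction l generalizing r with
  | nil => rfl
  | cons mm t ih =>
    show sFold d lam f t (blockFun d lam (f mm) mm (Fin.append x ![r])) = _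
    have hb : blockFun d lam (f mm) mm (Fin.append x ![r])
        = Fin.append x ![min r (hAux d lam (f mm) mm x)] := by
      unfold blockFun
      have h1 : (fun i => Fin.append x ![r] (Fin.castAdd 1 i)) = x := by
        funext i; rw [Fin.append_left]
      have h2 : Fin.append x ![r] (Fin.natAdd d 0) = r := by
        rw [Fin.append_right]; rfl
      rw [h1, h2]
    rw [hb, ih]
    rfl

lemma gFold_le_init (d : ℕ) (lam : ℝ) (f : (Fin d → ℝ) → ℝ) (l : List (Fin d → ℝ))
    (r : ℝ) (x : Fin d → ℝ) : gFold d lam f l r x ≤ r := by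
  induction l generalizing r with
  | nil => exact le_refl r
  | cons mm t ih => exact le_trans (ih _) (min_le_left _ _)

lemma gFold_le_mem (d : ℕ) (lam : ℝ) (f : (Fin d → ℝ) → ℝ) (l : List (Fin d → ℝ))
    (r : ℝ) (x : Fin d → ℝ) (mm : Fin d → ℝ) (hm : mm ∈ l) :
    gFold d lam f l r x ≤ hAux d lam (f mm) mm x := by
  induction l generalizing r with
  | nil => simp at hm
  | cons mm' t ih =>
    rcases List.mem_cons.mp hm with h | h
    · subst h
      exact le_trans (gFold_le_init d lam f t _ x) (min_le_right _ _)
    · exact ih _ h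

lemma le_gFold (d : ℕ) (lam : ℝ) (f : (Fin d → ℝ) → ℝ) (l : List (Fin d → ℝ))
    (r : ℝ) (x : Fin d → ℝ) (c : ℝ) (hr : c ≤ r)
    (hl : ∀ mm ∈ l, c ≤ hAux d lam (f mm) mm x) :
    c ≤ gFold d lam f l r x := by
  induction l generalizing r with
  | nil => exact hr
  | cons mm t ih =>
    refine ih _ (le_min hr (hl mm List.mem_cons_self))
      (fun p hp => hl p (List.mem_cons_of_mem _ hp))

lemma eudist_le_l1 (d : ℕ) (x y : Fin d → ℝ) :
    eudist d x y ≤ ∑ i, |x i - y i| := by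
  unfold eudist
  have hS : (0:ℝ) ≤ ∑ i, |x i - y i| := Finset.sum_nonneg fun i _ => abs_nonneg _
  rw [show (∑ i, (x i - y i) ^ 2) = ∑ i, |x i - y i| ^ 2 by
    exact Finset.sum_congr rfl fun i _ => (sq_abs _).symm]
  have h : (∑ i, |x i - y i| ^ 2) ≤ (∑ i, |x i - y i|) ^ 2 := by
    rw [sq (∑ i, |x i - y i|), Finset.sum_mul]
    apply Finset.sum_le_sum
    intro i _
    rw [sq]
    exact mul_le_mul_of_nonneg_left
      (Finset.single_le_sum (f := fun i => |x i - y i|) (fun j _ => abs_nonneg _)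
        (Finset.mem_univ i)) (abs_nonneg _)
  calc Real.sqrt (∑ i, |x i - y i| ^ 2) ≤ Real.sqrt ((∑ i, |x i - y i|) ^ 2) :=
        Real.sqrt_le_sqrt h
    _ = ∑ i, |x i - y i| := Real.sqrt_sq hS

def inLayer (d : ℕ) (r₀ : ℝ) : (Fin d → ℝ) → (Fin (d + 1) → ℝ) :=
  fun x => Fin.append x ![r₀]

def outLayer (d : ℕ) : (Fin (d + 1) → ℝ) → (Fin 1 → ℝ) :=
  fun s _ => s (Fin.natAdd d 0)

lemma inLayer_affine (d : ℕ) (r₀ : ℝ) : IsAffineMapR d (d + 1) (inLayer d r₀) := by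
  apply isAffineMapR_append (f := fun x => x) (g := fun _ => ![r₀])
  · exact isAffineMapR_congr (g := fun x (i : Fin d) => (1:ℝ) * x i + 0 * x i + 0)
      (by intro x; funext i; ring) (isAffineMapR_sel2 _ _ _ _ _)
  · refine isAffineMapR_congr (g := fun x (i : Fin 1) => (∑ j, (0:ℝ) * x j) + ![r₀] i)
      ?_ (isAffineMapR_rows _ _)
    intro x; funext i; simp

lemma outLayer_affine (d : ℕ) : IsAffineMapR (d + 1) 1 (outLayer d) :=
  isAffineMapR_congr (g := fun s (i : Fin 1) =>
      (1:ℝ) * s (Fin.natAdd d 0) + 0 * s (Fin.natAdd d 0) + 0)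
    (by intro s; funext i; show s _ = _; ring) (isAffineMapR_sel2 _ _ _ _ _)

/-- **Fixed-width uniform ReLU approximation to prescribed tolerance.**
For `f : [0,1]^d → ℝ` Lipschitz of rank `L₀` (Euclidean norm), every `ε > 0` and every
fixed integer width `W₀ ≥ 3^{d+4} d`, there are an integer depth `L ≥ 29 + 2d` and `f̂`
realized by a ReLU network of width `W₀` and depth `L` with
`sup_{x ∈ [0,1]^d} |f(x) − f̂(x)| ≤ ε`. -/
theorem relu_fixed_width_tolerance (d : ℕ) (hd : 1 ≤ d)
    (f : (Fin d → ℝ) → ℝ) (L₀ : ℝ) (hL₀ : 0 ≤ L₀)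
    (hf : ∀ x ∈ Set.Icc (0 : Fin d → ℝ) 1, ∀ y ∈ Set.Icc (0 : Fin d → ℝ) 1,
      |f x - f y| ≤ L₀ * eudist d x y) :
    ∀ ε > (0 : ℝ), ∀ W₀ : ℕ, 3 ^ (d + 4) * d ≤ W₀ →
      ∃ L : ℕ, 29 + 2 * d ≤ L ∧
        ∃ fhat : (Fin d → ℝ) → (Fin 1 → ℝ),
          RealizedBy W₀ L d 1 fhat ∧
          ∀ x ∈ Set.Icc (0 : Fin d → ℝ) 1, |f x - fhat x 0| ≤ ε := by
  intro ε hε W₀ hW₀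
  have h243 : 243 * d ≤ 3 ^ (d + 4) * d := by
    apply Nat.mul_le_mul_right
    calc (243:ℕ) = 3 ^ 5 := by norm_num
      _ ≤ 3 ^ (d + 4) := Nat.pow_le_pow_right (by norm_num) (by omega)
  have hW : d + d + 3 ≤ W₀ := by
    have h1 : d + d + 3 ≤ 243 * d := by omega
    exact le_trans h1 (le_trans h243 hW₀)
  set N : ℕ := max 1 (Nat.ceil (2 * L₀ * d / ε)) with hN
  have hN1 : 1 ≤ N := le_max_left _ _
  have hN1R : (1:ℝ) ≤ N := by exact_mod_cast hN1
  have hNpos : (0:ℝ) < N := by linarith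
  have hNe : 2 * L₀ * d ≤ ε * N := by
    have h1 : 2 * L₀ * d / ε ≤ (Nat.ceil (2 * L₀ * d / ε) : ℝ) := Nat.le_ceil _
    have h2 : ((Nat.ceil (2 * L₀ * d / ε) : ℕ) : ℝ) ≤ (N : ℝ) := by
      exact_mod_cast le_max_right 1 (Nat.ceil (2 * L₀ * d / ε))
    have h3 := le_trans h1 h2
    rw [div_le_iff₀ hε] at h3
    linarith
  set gp : (Fin d → Fin (N + 1)) → (Fin d → ℝ) := fun ν i => (ν i : ℝ) / N with hgp
  set l : List (Fin d → ℝ) :=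
    List.replicate (15 + d) (fun _ => (0:ℝ))
      ++ (Finset.univ : Finset (Fin d → Fin (N + 1))).toList.map gp with hl
  have hcube : ∀ mm ∈ l, mm ∈ Set.Icc (0 : Fin d → ℝ) 1 := by
    intro mm hm
    rcases List.mem_append.mp hm with h | h
    · have := List.eq_of_mem_replicate h
      subst this
      exact Set.mem_Icc.mpr ⟨fun i => le_refl 0, fun i => zero_le_one⟩
    · obtain ⟨ν, _, rfl⟩ := List.mem_map.mp h
      refine Set.mem_Icc.mpr ⟨fun i => ?_, fun i => ?_⟩
      · exact div_nonneg (by positivity) (le_of_lt hNpos)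
      · show ((ν i : ℕ) : ℝ) / N ≤ 1
        rw [div_le_one hNpos]
        exact_mod_cast Fin.is_le (ν i)
  set r₀ : ℝ := f (fun _ => 0) + L₀ * d with hr₀
  set G : (Fin d → ℝ) → ℝ := gFold d L₀ f l r₀ with hG
  have h0cube : (fun _ => (0:ℝ)) ∈ Set.Icc (0 : Fin d → ℝ) 1 :=
    Set.mem_Icc.mpr ⟨fun i => le_refl 0, fun i => zero_le_one⟩
  refine ⟨2 * l.length, ?_, ?_⟩
  · have h1 : 15 + d ≤ l.length := by
      rw [hl, List.length_append, List.length_replicate]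
      omega
    omega
  refine ⟨fun x => outLayer d (sFold d L₀ f l (inLayer d r₀ x)), ?_, ?_⟩
  · have h1 : RealizedBy W₀ 0 d (d + 1) (inLayer d r₀) := realizedBy_zero (inLayer_affine d r₀)
    have h2 := sFold_realized (Wd := W₀) d L₀ f hW l
    have h3 := realizedBy_comp h1 h2
    exact realizedBy_affine_comp h3 (outLayer_affine d)
  · intro x hx
    have hfx : outLayer d (sFold d L₀ f l (inLayer d r₀ x)) 0 = G x := by
      show outLayer d (sFold d L₀ f l (Fin.append x ![r₀])) 0 = G x
      rw [sFold_eval]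
      show Fin.append x ![G x] (Fin.natAdd d 0) = G x
      rw [Fin.append_right]
      rfl
    show |f x - outLayer d (sFold d L₀ f l (inLayer d r₀ x)) 0| ≤ ε
    rw [hfx]
    have hx0 : ∀ i, 0 ≤ x i := fun i => hx.1 i
    have hx1 : ∀ i, x i ≤ 1 := fun i => hx.2 i
    have hlow : f x ≤ G x := by
      apply le_gFold
      · -- f x ≤ r₀
        have hlip := hf x hx _ h0cube
        have h1 : f x - f (fun _ => 0) ≤ L₀ * eudist d x (fun _ => 0) :=
          le_trans (le_abs_self _) hlip
        have h2 : eudist d x (fun _ => 0) ≤ (d : ℝ) := by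
          refine le_trans (eudist_le_l1 d x _) ?_
          calc (∑ i, |x i - 0|) ≤ ∑ _i : Fin d, (1:ℝ) := by
                apply Finset.sum_le_sum
                intro i _
                rw [sub_zero, abs_of_nonneg (hx0 i)]
                exact hx1 i
            _ = d := by simp
        have h3 : L₀ * eudist d x (fun _ => 0) ≤ L₀ * d :=
          mul_le_mul_of_nonneg_left h2 hL₀
        rw [hr₀]
        linarith
      · intro mm hm
        have hmc := hcube mm hm
        have hlip := hf x hx mm hmc
        have h1 : f x - f mm ≤ L₀ * eudist d x mm := le_trans (le_abs_self _) hlip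
        have h2 : L₀ * eudist d x mm ≤ L₀ * ∑ i, |x i - mm i| :=
          mul_le_mul_of_nonneg_left (eudist_le_l1 d x mm) hL₀
        unfold hAux
        linarith
    have hup : G x ≤ f x + ε := by
      have hflo : ∀ i, Nat.floor (x i * N) < N + 1 := by
        intro i
        have h1 : x i * N ≤ (N : ℝ) := by
          nlinarith [hx1 i, hNpos]
        have h2 : Nat.floor (x i * N) ≤ Nat.floor ((N:ℝ)) := Nat.floor_le_floor h1
        rw [Nat.floor_natCast] at h2
        omega
      set ν : Fin d → Fin (N + 1) := fun i => ⟨Nat.floor (x i * N), hflo i⟩ with hν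
      have hmm : gp ν ∈ l := by
        rw [hl]
        refine List.mem_append.mpr (Or.inr ?_)
        exact List.mem_map.mpr ⟨ν, Finset.mem_toList.mpr (Finset.mem_univ ν), rfl⟩
      have hnear : ∀ i, |x i - gp ν i| ≤ 1 / N := by
        intro i
        have ht0 : 0 ≤ x i * N := mul_nonneg (hx0 i) hNpos.le
        have h1 : ((Nat.floor (x i * N) : ℕ) : ℝ) ≤ x i * N := Nat.floor_le ht0
        have h2 : x i * N < (Nat.floor (x i * N) : ℝ) + 1 := Nat.lt_floor_add_one _
        have hgpv : gp ν i = ((Nat.floor (x i * N) : ℕ) : ℝ) / N := rfl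
        rw [hgpv, abs_le]
        constructor
        · have h3 : ((Nat.floor (x i * N) : ℕ) : ℝ) / N ≤ x i := by
            rw [div_le_iff₀ hNpos]
            linarith
          have h4 : (0:ℝ) ≤ 1 / N := by positivity
          linarith
        · have h3 : x i ≤ (((Nat.floor (x i * N) : ℕ) : ℝ) + 1) / N := by
            rw [le_div_iff₀ hNpos]
            linarith
          have h4 : (((Nat.floor (x i * N) : ℕ) : ℝ) + 1) / N
              = ((Nat.floor (x i * N) : ℕ) : ℝ) / N + 1 / N := by ring
          linarith [h3, h4.le]
      have hsum : (∑ i, |x i - gp ν i|) ≤ (d : ℝ) / N := by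
        calc (∑ i, |x i - gp ν i|) ≤ ∑ _i : Fin d, 1 / (N:ℝ) :=
              Finset.sum_le_sum (fun i _ => hnear i)
          _ = (d : ℝ) / N := by
              rw [Finset.sum_const, Finset.card_univ, Fintype.card_fin, nsmul_eq_mul]
              ring
      have h1 : G x ≤ hAux d L₀ (f (gp ν)) (gp ν) x := gFold_le_mem d L₀ f l r₀ x _ hmm
      have hlip := hf (gp ν) (hcube _ hmm) x hx
      have h2 : f (gp ν) - f x ≤ L₀ * eudist d (gp ν) x := le_trans (le_abs_self _) hlip
      have h3 : eudist d (gp ν) x ≤ ∑ i, |x i - gp ν i| := by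
        refine le_trans (eudist_le_l1 d (gp ν) x) ?_
        apply le_of_eq
        apply Finset.sum_congr rfl
        intro i _
        rw [abs_sub_comm]
      have h4 : L₀ * eudist d (gp ν) x ≤ L₀ * ((d:ℝ) / N) :=
        mul_le_mul_of_nonneg_left (le_trans h3 hsum) hL₀
      have h5 : L₀ * (∑ i, |x i - gp ν i|) ≤ L₀ * ((d:ℝ) / N) :=
        mul_le_mul_of_nonneg_left hsum hL₀
      have h6 : 2 * (L₀ * ((d:ℝ) / N)) ≤ ε := by
        rw [show 2 * (L₀ * ((d:ℝ) / N)) = 2 * L₀ * d / N by ring]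
        rw [div_le_iff₀ hNpos]
        linarith
      unfold hAux at h1
      linarith
    have habs : |f x - G x| = G x - f x := by
      rw [abs_sub_comm]
      exact abs_of_nonneg (by linarith)
    rw [habs]
    linarith
end

section
/- Let d ≥ 1 and let f : [0,1]^d → ℝ be Lipschitz with rank L₀ with respect to the Euclidean norm. Then for every ε > 0 and every fixed integer 𝓛₀ ≥ 29 + 2d, there exist an integer W ≥ 3^{d+4}·d and a function f̂ realized by a ReLU network of depth 𝓛₀ and width W such that sup_{x ∈ [0,1]^d} |f(x) − f̂(x)| ≤ ε. -/
open Matrix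

/-! ### Affine map lemmas -/

lemma affine_comp {a b c : ℕ} {A : (Fin b → ℝ) → (Fin c → ℝ)} {B : (Fin a → ℝ) → (Fin b → ℝ)}
    (hA : IsAffineMapR b c A) (hB : IsAffineMapR a b B) :
    IsAffineMapR a c (fun x => A (B x)) := by
  obtain ⟨M1, c1, h1⟩ := hA
  obtain ⟨M2, c2, h2⟩ := hB
  refine ⟨M1 * M2, M1 *ᵥ c2 + c1, fun x => ?_⟩
  show A (B x) = _
  rw [h2, h1, Matrix.mulVec_add, Matrix.mulVec_mulVec, add_assoc]

lemma affine_row {a : ℕ} (w : Fin a → ℝ) (c : ℝ) :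
    IsAffineMapR a 1 (fun x => fun _ => ∑ j, w j * x j + c) := by
  refine ⟨Matrix.of (fun _ j => w j), fun _ => c, fun x => ?_⟩
  funext i
  simp [Matrix.mulVec, dotProduct]

lemma affine_id {a : ℕ} : IsAffineMapR a a (fun x => x) := by
  refine ⟨1, 0, fun x => ?_⟩
  rw [Matrix.one_mulVec, add_zero]

/-! ### Basic realizability lemmas -/

lemma realized_mono {W W' L a b : ℕ} {f : (Fin a → ℝ) → (Fin b → ℝ)}
    (h : RealizedBy W L a b f) (hW : W ≤ W') : RealizedBy W' L a b f := by
  induction L generalizing b f with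
  | zero => exact h
  | succ L ih =>
    obtain ⟨k, g, Aff, hk, hg, hAff, hf⟩ := h
    exact ⟨k, g, Aff, hk.trans hW, ih hg, hAff, hf⟩

lemma realized_post {W L a b c : ℕ} {f : (Fin a → ℝ) → (Fin b → ℝ)}
    {A : (Fin b → ℝ) → (Fin c → ℝ)} (h : RealizedBy W L a b f) (hA : IsAffineMapR b c A) :
    RealizedBy W L a c (fun x => A (f x)) := by
  induction L generalizing b c f A with
  | zero => exact affine_comp hA h
  | succ L ih =>
    obtain ⟨k, g, Aff, hk, hg, hAff, hf⟩ := h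
    exact ⟨k, g, fun u => A (Aff u), hk, hg, affine_comp hA hAff, by rw [hf]⟩

/-! ### Pairing (parallel composition) -/

lemma relu_append {k1 k2 : ℕ} (U : Fin k1 → ℝ) (V : Fin k2 → ℝ) :
    reluVec (k1 + k2) (Fin.append U V) = Fin.append (reluVec k1 U) (reluVec k2 V) := by
  funext i
  refine Fin.addCases (fun i1 => ?_) (fun i2 => ?_) i <;>
    simp [reluVec, Fin.append_left, Fin.append_right]

lemma append_comp_castAdd {k1 k2 : ℕ} (U : Fin k1 → ℝ) (V : Fin k2 → ℝ) :
    (fun i => Fin.append U V (Fin.castAdd k2 i)) = U := by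
  funext i; exact Fin.append_left U V i

lemma append_comp_natAdd {k1 k2 : ℕ} (U : Fin k1 → ℝ) (V : Fin k2 → ℝ) :
    (fun i => Fin.append U V (Fin.natAdd k1 i)) = V := by
  funext i; exact Fin.append_right U V i

lemma affine_block {k1 k2 b1 b2 : ℕ} {F : (Fin k1 → ℝ) → (Fin b1 → ℝ)}
    {G : (Fin k2 → ℝ) → (Fin b2 → ℝ)} (hF : IsAffineMapR k1 b1 F) (hG : IsAffineMapR k2 b2 G) :
    IsAffineMapR (k1 + k2) (b1 + b2)
      (fun w => Fin.append (F (fun i => w (Fin.castAdd k2 i))) (G (fun j => w (Fin.natAdd k1 j)))) := by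
  obtain ⟨MF, cF, hMF⟩ := hF
  obtain ⟨MG, cG, hMG⟩ := hG
  refine ⟨Matrix.of (Fin.append (fun i1 => Fin.append (MF i1) 0)
      (fun i2 => Fin.append 0 (MG i2))), Fin.append cF cG, fun w => ?_⟩
  funext i
  refine Fin.addCases (fun i1 => ?_) (fun i2 => ?_) i
  · show Fin.append (F fun i => w (Fin.castAdd k2 i)) (G fun j => w (Fin.natAdd k1 j)) _ = _
    rw [Fin.append_left, hMF]
    simp only [Pi.add_apply, Matrix.mulVec, dotProduct, Matrix.of_apply, Fin.append_left]
    rw [Fin.sum_univ_add]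
    simp [Fin.append_left, Fin.append_right]
  · show Fin.append (F fun i => w (Fin.castAdd k2 i)) (G fun j => w (Fin.natAdd k1 j)) _ = _
    rw [Fin.append_right, hMG]
    simp only [Pi.add_apply, Matrix.mulVec, dotProduct, Matrix.of_apply, Fin.append_right]
    rw [Fin.sum_univ_add]
    simp [Fin.append_left, Fin.append_right]

lemma realized_pair {W1 W2 L a b1 b2 : ℕ} {f : (Fin a → ℝ) → (Fin b1 → ℝ)}
    {g : (Fin a → ℝ) → (Fin b2 → ℝ)} (hf : RealizedBy W1 L a b1 f)
    (hg : RealizedBy W2 L a b2 g) :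
    RealizedBy (W1 + W2) L a (b1 + b2) (fun x => Fin.append (f x) (g x)) := by
  induction L generalizing b1 b2 f g with
  | zero =>
    obtain ⟨M1, c1, h1⟩ := hf
    obtain ⟨M2, c2, h2⟩ := hg
    refine ⟨Matrix.of (Fin.append (fun i => M1 i) (fun i => M2 i)), Fin.append c1 c2, fun x => ?_⟩
    funext i
    refine Fin.addCases (fun i1 => ?_) (fun i2 => ?_) i
    · show Fin.append (f x) (g x) _ = _
      rw [Fin.append_left, h1]
      simp [Matrix.mulVec, Fin.append_left]
    · show Fin.append (f x) (g x) _ = _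
      rw [Fin.append_right, h2]
      simp [Matrix.mulVec, Fin.append_right]
  | succ L ih =>
    obtain ⟨k1, u, F, hk1, hu, hF, hfe⟩ := hf
    obtain ⟨k2, v, G, hk2, hv, hG, hge⟩ := hg
    refine ⟨k1 + k2, fun x => Fin.append (u x) (v x), _, Nat.add_le_add hk1 hk2,
      ih hu hv, affine_block hF hG, ?_⟩
    funext x
    rw [hfe, hge]
    simp only [relu_append, append_comp_castAdd, append_comp_natAdd]

/-! ### Depth padding -/

lemma affine_dup_neg (b : ℕ) :
    IsAffineMapR b (b + b) (fun y => Fin.append y (fun i => - y i)) := by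
  refine ⟨Matrix.of (Fin.append (fun i j => if i = j then (1:ℝ) else 0)
    (fun i j => if i = j then (-1:ℝ) else 0)), 0, fun y => ?_⟩
  funext i
  refine Fin.addCases (fun i1 => ?_) (fun i2 => ?_) i
  · show Fin.append y (fun i => - y i) _ = _
    rw [Fin.append_left]
    simp only [Pi.add_apply, Pi.zero_apply, Matrix.mulVec, dotProduct, Matrix.of_apply,
      Fin.append_left, ite_mul, one_mul, zero_mul, add_zero]
    rw [Finset.sum_ite_eq Finset.univ i1 (fun j => y j)]
    simp
  · show Fin.append y (fun i => - y i) _ = _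
    rw [Fin.append_right]
    simp only [Pi.add_apply, Pi.zero_apply, Matrix.mulVec, dotProduct, Matrix.of_apply,
      Fin.append_right, ite_mul, neg_one_mul, zero_mul, add_zero]
    rw [Finset.sum_ite_eq Finset.univ i2 (fun j => - y j)]
    simp

lemma affine_sub_halves (b : ℕ) :
    IsAffineMapR (b + b) b (fun w => fun i => w (Fin.castAdd b i) - w (Fin.natAdd b i)) := by
  refine ⟨Matrix.of (fun i => Fin.append (fun j => if i = j then (1:ℝ) else 0)
    (fun j => if i = j then (-1:ℝ) else 0)), 0, fun w => ?_⟩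
  funext i
  show w (Fin.castAdd b i) - w (Fin.natAdd b i) = _
  simp only [Pi.add_apply, Pi.zero_apply, Matrix.mulVec, dotProduct, Matrix.of_apply,
    add_zero]
  rw [Fin.sum_univ_add]
  simp only [Fin.append_left, Fin.append_right, ite_mul, one_mul, neg_one_mul, zero_mul]
  rw [Finset.sum_ite_eq Finset.univ i (fun j => w (Fin.castAdd b j)),
    Finset.sum_ite_eq Finset.univ i (fun j => - w (Fin.natAdd b j))]
  simp [sub_eq_add_neg]

lemma realized_pad {W L a b : ℕ} {f : (Fin a → ℝ) → (Fin b → ℝ)}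
    (h : RealizedBy W L a b f) (hb : b + b ≤ W) : RealizedBy W (L + 1) a b f := by
  refine ⟨b + b, fun x => Fin.append (f x) (fun i => - f x i),
    fun w => fun i => w (Fin.castAdd b i) - w (Fin.natAdd b i), hb,
    realized_post h (affine_dup_neg b), affine_sub_halves b, ?_⟩
  funext x
  funext i
  show f x i = _
  simp only [relu_append]
  simp only [reluVec, Fin.append_left, Fin.append_right]
  exact (max_zero_sub_max_neg_zero_eq_self (f x i)).symm

/-! ### Existential-width realizability -/

def RW (L a b : ℕ) (f : (Fin a → ℝ) → (Fin b → ℝ)) : Prop :=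
  ∃ W, RealizedBy W L a b f

lemma RW.of_affine {a b : ℕ} {f} (h : IsAffineMapR a b f) : RW 0 a b f := ⟨0, h⟩

lemma RW.post {L a b c : ℕ} {f} {A} (h : RW L a b f) (hA : IsAffineMapR b c A) :
    RW L a c (fun x => A (f x)) := by
  obtain ⟨W, hW⟩ := h; exact ⟨W, realized_post hW hA⟩

lemma RW.pair {L a b1 b2 : ℕ} {f g} (hf : RW L a b1 f) (hg : RW L a b2 g) :
    RW L a (b1 + b2) (fun x => Fin.append (f x) (g x)) := by
  obtain ⟨W1, h1⟩ := hf; obtain ⟨W2, h2⟩ := hg; exact ⟨W1 + W2, realized_pair h1 h2⟩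

lemma RW.pad {L a b : ℕ} {f} (h : RW L a b f) : RW (L + 1) a b f := by
  obtain ⟨W, hW⟩ := h
  exact ⟨max W (b + b), realized_pad (realized_mono hW (le_max_left _ _)) (le_max_right _ _)⟩

lemma RW.pad_le {L L' a b : ℕ} {f} (h : RW L a b f) (hL : L ≤ L') : RW L' a b f := by
  induction L' with
  | zero => exact (Nat.le_zero.mp hL) ▸ h
  | succ L' ih =>
    rcases Nat.lt_or_ge L (L' + 1) with hlt | hge
    · exact (ih (Nat.lt_succ_iff.mp hlt)).pad
    · exact (Nat.le_antisymm hL hge) ▸ h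

lemma RW.congr {L a b : ℕ} {f g} (h : RW L a b f) (hfg : f = g) : RW L a b g := hfg ▸ h

/-! ### Scalar combinators -/

def Sc (L a : ℕ) (e : (Fin a → ℝ) → ℝ) : Prop := RW L a 1 (fun x => fun _ => e x)

lemma Sc.congr {L a : ℕ} {e e' : (Fin a → ℝ) → ℝ} (h : Sc L a e) (he : ∀ x, e x = e' x) :
    Sc L a e' := by
  have : (fun x => fun _ : Fin 1 => e x) = (fun x => fun _ : Fin 1 => e' x) := by
    funext x i; exact he x
  exact RW.congr h this

lemma Sc.affine {a : ℕ} (w : Fin a → ℝ) (c : ℝ) :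
    Sc 0 a (fun x => ∑ j, w j * x j + c) := RW.of_affine (affine_row w c)

lemma Sc.const {L a : ℕ} (c : ℝ) : Sc L a (fun _ => c) := by
  have h0 : Sc 0 a (fun _ => c) := (Sc.affine 0 c).congr (by intro x; simp)
  exact RW.pad_le h0 (Nat.zero_le L)

/-- coordinate-type affine map realized at any depth -/
lemma Sc.affine_any {L a : ℕ} (w : Fin a → ℝ) (c : ℝ) :
    Sc L a (fun x => ∑ j, w j * x j + c) := RW.pad_le (Sc.affine w c) (Nat.zero_le L)

/-- affine combination of two realized scalars -/
lemma Sc.affcomb {L a : ℕ} {e1 e2 : (Fin a → ℝ) → ℝ} (h1 : Sc L a e1) (h2 : Sc L a e2)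
    (α β γ : ℝ) : Sc L a (fun x => α * e1 x + β * e2 x + γ) := by
  have hp : RW L a (1 + 1) (fun x => Fin.append (fun _ : Fin 1 => e1 x) (fun _ : Fin 1 => e2 x)) :=
    RW.pair h1 h2
  have hA : IsAffineMapR (1 + 1) 1 (fun v => fun _ : Fin 1 =>
      ∑ j, Fin.append (fun _ : Fin 1 => α) (fun _ : Fin 1 => β) j * v j + γ) :=
    affine_row _ γ
  have := hp.post hA
  refine RW.congr this ?_
  funext x i
  show ∑ j, _ + γ = _
  rw [Fin.sum_univ_add]
  simp only [Fin.append_left, Fin.append_right, Fin.sum_univ_one]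

lemma Sc.pad_le {L L' a : ℕ} {e : (Fin a → ℝ) → ℝ} (h : Sc L a e) (hL : L ≤ L') : Sc L' a e :=
  RW.pad_le h hL

lemma Sc.add {L a : ℕ} {e1 e2 : (Fin a → ℝ) → ℝ} (h1 : Sc L a e1) (h2 : Sc L a e2) :
    Sc L a (fun x => e1 x + e2 x) :=
  (h1.affcomb h2 1 1 0).congr (by intro x; ring)

lemma Sc.smul {L a : ℕ} {e : (Fin a → ℝ) → ℝ} (h : Sc L a e) (c : ℝ) :
    Sc L a (fun x => c * e x) :=
  (h.affcomb h c 0 0).congr (by intro x; ring)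

/-- one ReLU applied to a scalar -/
lemma Sc.max0 {L a : ℕ} {e : (Fin a → ℝ) → ℝ} (h : Sc L a e) :
    Sc (L + 1) a (fun x => max (e x) 0) := by
  obtain ⟨W, hW⟩ := h
  refine ⟨max W 1, ⟨1, fun x => fun _ => e x, fun v => v, le_max_right _ _,
    realized_mono hW (le_max_left _ _), affine_id, ?_⟩⟩
  funext x i
  have : i = 0 := Subsingleton.elim i 0
  subst this
  rfl

/-- max of two realized scalars -/
lemma Sc.maxPair {L a : ℕ} {e1 e2 : (Fin a → ℝ) → ℝ} (h1 : Sc L a e1) (h2 : Sc L a e2) :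
    Sc (L + 1) a (fun x => max (e1 x) (e2 x)) := by
  -- inner: x ↦ (e1 - e2, e2, -e2) ∈ ℝ³, then max(e1,e2) = σ(e1-e2) + σ(e2) - σ(-e2)
  have hd : Sc L a (fun x => e1 x - e2 x) := (h1.affcomb h2 1 (-1) 0).congr (by intro x; ring)
  have hn : Sc L a (fun x => - e2 x) := (h2.smul (-1)).congr (by intro x; ring)
  have hp1 : RW L a (1 + 1) (fun x => Fin.append (fun _ : Fin 1 => e1 x - e2 x)
      (fun _ : Fin 1 => e2 x)) := RW.pair hd h2
  have hp : RW L a (1 + 1 + 1) (fun x => Fin.append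
      (Fin.append (fun _ : Fin 1 => e1 x - e2 x) (fun _ : Fin 1 => e2 x))
      (fun _ : Fin 1 => - e2 x)) := RW.pair hp1 hn
  obtain ⟨W, hW⟩ := hp
  refine ⟨max W 3, ⟨1 + 1 + 1, _, fun v => fun _ : Fin 1 =>
      ∑ j, Fin.append (Fin.append (fun _ : Fin 1 => (1:ℝ)) (fun _ : Fin 1 => (1:ℝ)))
        (fun _ : Fin 1 => (-1:ℝ)) j * v j + 0,
    by norm_num, realized_mono hW (le_max_left _ _), affine_row _ 0, ?_⟩⟩
  funext x i
  show max (e1 x) (e2 x) = ∑ j, _ + 0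
  rw [Fin.sum_univ_add]
  simp only [reluVec, Fin.append_left, Fin.append_right]
  rw [Fin.sum_univ_add]
  simp only [Fin.append_left, Fin.append_right]
  simp only [Finset.univ_unique, Finset.sum_singleton, one_mul, neg_one_mul, add_zero]
  rcases le_total (e1 x) (e2 x) with hle | hle
  · rw [max_eq_right hle, max_eq_right (by linarith)]
    rcases le_total (e2 x) 0 with h2' | h2'
    · rw [max_eq_right h2', max_eq_left (by linarith)]; ring
    · rw [max_eq_left h2', max_eq_right (by linarith)]; ring
  · rw [max_eq_left hle, max_eq_left (by linarith)]
    rcases le_total (e2 x) 0 with h2' | h2'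
    · rw [max_eq_right h2', max_eq_left (by linarith)]; ring
    · rw [max_eq_left h2', max_eq_right (by linarith)]; ring

/-- finite sums of realized scalars -/
lemma Sc.sum {L a : ℕ} {ι : Type*} [DecidableEq ι] (s : Finset ι)
    (e : ι → (Fin a → ℝ) → ℝ) (h : ∀ i ∈ s, Sc L a (e i)) :
    Sc L a (fun x => ∑ i ∈ s, e i x) := by
  induction s using Finset.induction_on with
  | empty => exact (Sc.const 0).congr (by intro x; simp)
  | insert i s' hni ih =>
    have hi := h i (Finset.mem_insert_self i s')
    have hs := ih (fun j hj => h j (Finset.mem_insert_of_mem hj))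
    exact (hi.add hs).congr (by intro x; rw [Finset.sum_insert hni])

/-- fold max over a finite set of realized scalars -/
lemma Sc.foldmax {L a : ℕ} {ι : Type*} [DecidableEq ι] (s : Finset ι)
    (e : ι → (Fin a → ℝ) → ℝ) (h : ∀ i ∈ s, Sc L a (e i)) :
    Sc (L + s.card) a (fun x => s.fold max 0 (fun i => e i x)) := by
  induction s using Finset.induction_on with
  | empty => exact (Sc.const 0).congr (by intro x; simp)
  | insert i s' hni ih =>
    have hi := h i (Finset.mem_insert_self i s')
    have hs := ih (fun j hj => h j (Finset.mem_insert_of_mem hj))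
    have hmax := (Sc.pad_le hi (Nat.le_add_right L s'.card)).maxPair hs
    have hcard : L + s'.card + 1 = L + (insert i s').card := by
      rw [Finset.card_insert_of_notMem hni]; omega
    refine (hcard ▸ hmax).congr ?_
    intro x
    rw [Finset.fold_insert hni]

/-! ### Core partition-of-unity identity -/

lemma fold_min_min {ι : Type*} [DecidableEq ι] (a b : ℝ) (f : ι → ℝ) (s : Finset ι) :
    min a (s.fold min b f) = s.fold min (min a b) f := by
  induction s using Finset.induction_on with
  | empty => simp
  | insert i s' hni ih =>
    rw [Finset.fold_insert hni, Finset.fold_insert hni, ← ih, min_left_comm]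

lemma corePartition : ∀ (d : ℕ) (g : Fin d → ℝ) (lo hi : ℝ), lo ≤ hi →
    (∀ k, lo ≤ g k) → (∀ k, g k ≤ hi) →
    ∑ T : Finset (Fin d), max (T.fold min hi g - Tᶜ.fold max lo g) 0 = hi - lo := by
  intro d
  induction d with
  | zero =>
    intro g lo hi hlohi _ _
    have huniv : (Finset.univ : Finset (Finset (Fin 0))) = {∅} := by
      ext T
      simp only [Finset.mem_univ, Finset.mem_singleton, true_iff]
      exact Finset.eq_empty_of_forall_notMem (fun a _ => a.elim0)
    rw [huniv, Finset.sum_singleton]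
    have hemp : (∅ : Finset (Fin 0))ᶜ = ∅ :=
      Finset.eq_empty_of_forall_notMem (fun a _ => a.elim0)
    rw [hemp, Finset.fold_empty, Finset.fold_empty]
    exact max_eq_left (by linarith)
  | succ d ih =>
    intro g lo hi hlohi hlo hhi
    obtain ⟨istar, -, hmax⟩ := Finset.exists_max_image Finset.univ g ⟨0, Finset.mem_univ 0⟩
    have hmax' : ∀ k, g k ≤ g istar := fun k => hmax k (Finset.mem_univ k)
    rw [← Finset.sum_filter_add_sum_filter_not Finset.univ (fun T => istar ∈ T)]
    -- Part A : T with istar ∉ T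
    have hA : ∑ T ∈ Finset.univ.filter (fun T : Finset (Fin (d+1)) => istar ∉ T),
        max (Finset.fold min hi g T - Finset.fold max lo g Tᶜ) 0 = hi - g istar := by
      rw [Finset.sum_eq_single_of_mem (∅ : Finset (Fin (d+1)))
        (by simp)]
      · have hcompl : (∅ : Finset (Fin (d+1)))ᶜ = Finset.univ := Finset.compl_empty
        rw [hcompl, Finset.fold_empty]
        have hfold : Finset.univ.fold max lo g = g istar := by
          apply le_antisymm
          · exact (Finset.fold_max_le _).mpr ⟨hlo istar, fun k _ => hmax' k⟩
          · exact (Finset.le_fold_max _).mpr (Or.inr ⟨istar, Finset.mem_univ istar, le_rfl⟩)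
        rw [hfold]
        exact max_eq_left (by linarith [hlo istar, hhi istar])
      · intro T hT hTne
        rw [Finset.mem_filter] at hT
        obtain ⟨j, hj⟩ := Finset.nonempty_iff_ne_empty.mpr hTne
        have h1 : T.fold min hi g ≤ g j := (Finset.fold_min_le _).mpr (Or.inr ⟨j, hj, le_rfl⟩)
        have h2 : g istar ≤ Tᶜ.fold max lo g :=
          (Finset.le_fold_max _).mpr (Or.inr ⟨istar, Finset.mem_compl.mpr hT.2, le_rfl⟩)
        exact max_eq_right (by linarith [hmax' j])
    -- Part B : T with istar ∈ T
    have hB : ∑ T ∈ Finset.univ.filter (fun T : Finset (Fin (d+1)) => istar ∈ T),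
        max (Finset.fold min hi g T - Finset.fold max lo g Tᶜ) 0 = g istar - lo := by
      have hinj : Function.Injective (Fin.succAbove istar) := Fin.succAbove_right_injective
      set e : Fin d ↪ Fin (d + 1) := Fin.succAboveEmb istar with he
      have hrw : ∑ T' : Finset (Fin d),
          max (T'.fold min (g istar) (g ∘ e) - T'ᶜ.fold max lo (g ∘ e)) 0 = g istar - lo := by
        apply ih
        · exact hlo istar
        · intro k; exact hlo _
        · intro k; exact hmax' _
      rw [← hrw]
      apply Finset.sum_nbij' (i := fun T => (T.erase istar).preimage e
          (Set.injOn_of_injective e.injective))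
        (j := fun T' => insert istar (T'.map e))
      · intro T hT
        exact Finset.mem_univ _
      · intro T' _
        simp only [Finset.mem_filter]
        exact ⟨Finset.mem_univ _, Finset.mem_insert_self _ _⟩
      · -- left inverse
        intro T hT
        rw [Finset.mem_filter] at hT
        ext j
        by_cases hj : j = istar
        · subst hj
          simp [hT.2]
        · obtain ⟨k, hk⟩ := Fin.exists_succAbove_eq hj
          subst hk
          simp only [Finset.mem_insert, Finset.mem_map, Finset.mem_preimage,
            Finset.mem_erase]
          constructor
          · intro h'
            rcases h' with h' | ⟨k', hk', hk'e⟩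
            · exact absurd h' hj
            · have : k' = k := hinj hk'e
              subst this
              exact hk'.2
          · intro h'
            exact Or.inr ⟨k, ⟨hj, h'⟩, rfl⟩
      · -- right inverse
        intro T' _
        ext k
        simp only [Finset.mem_preimage, Finset.mem_erase, Finset.mem_insert, Finset.mem_map]
        constructor
        · intro ⟨hne, h'⟩
          rcases h' with h' | ⟨k', hk', hk'e⟩
          · exact absurd h' hne
          · have : k' = k := hinj hk'e
            subst this; exact hk'
        · intro hk
          exact ⟨Fin.succAbove_ne istar k, Or.inr ⟨k, hk, rfl⟩⟩
      · -- value equality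
        intro T hT
        rw [Finset.mem_filter] at hT
        set T' := (T.erase istar).preimage e (Set.injOn_of_injective e.injective)
          with hT'
        have hTeq : T = insert istar (T'.map e) := by
          ext j
          by_cases hj : j = istar
          · subst hj; simp [hT.2]
          · obtain ⟨k, hk⟩ := Fin.exists_succAbove_eq hj
            subst hk
            simp only [Finset.mem_insert, Finset.mem_map, hT', Finset.mem_preimage,
              Finset.mem_erase]
            constructor
            · intro h'
              exact Or.inr ⟨k, ⟨hj, h'⟩, rfl⟩
            · intro h'
              rcases h' with h' | ⟨k', hk', hk'e⟩
              · exact absurd h' hj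
              · have : k' = k := hinj hk'e
                subst this; exact hk'.2
        have hnotmem : istar ∉ T'.map e := by
          simp only [Finset.mem_map]
          rintro ⟨k', _, hk'e⟩
          exact Fin.succAbove_ne istar k' hk'e
        have hfold1 : T.fold min hi g = T'.fold min (g istar) (g ∘ e) := by
          rw [hTeq, Finset.fold_insert hnotmem, Finset.fold_map, fold_min_min,
            min_eq_left (hhi istar)]
        have hcompl : (insert istar (T'.map e))ᶜ = T'ᶜ.map e := by
          ext j
          simp only [Finset.mem_compl, Finset.mem_insert, Finset.mem_map, not_or]
          constructor
          · rintro ⟨hne, hnm⟩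
            obtain ⟨k, hk⟩ := Fin.exists_succAbove_eq hne
            exact ⟨k, fun hkT' => hnm ⟨k, hkT', hk⟩, hk⟩
          · rintro ⟨k, hk, rfl⟩
            refine ⟨Fin.succAbove_ne istar k, ?_⟩
            rintro ⟨k', hk', hk'e⟩
            exact hk (hinj hk'e ▸ hk')
        have hfold2 : Tᶜ.fold max lo g = T'ᶜ.fold max lo (g ∘ e) := by
          rw [hTeq, hcompl, Finset.fold_map]
        rw [hfold1, hfold2]
    rw [hA, hB]
    ring

/-! ### The grid hat functions -/

noncomputable def gridA (d n : ℕ) (p : Fin d → Fin (n+1)) (x : Fin d → ℝ) : ℝ :=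
  Finset.univ.fold max 0 (fun k => (n:ℝ) * x k - ((p k : ℕ) : ℝ))

noncomputable def gridB (d n : ℕ) (p : Fin d → Fin (n+1)) (x : Fin d → ℝ) : ℝ :=
  Finset.univ.fold max 0 (fun k => ((p k : ℕ) : ℝ) - (n:ℝ) * x k)

noncomputable def gridPhi (d n : ℕ) (p : Fin d → Fin (n+1)) (x : Fin d → ℝ) : ℝ :=
  max (1 - gridA d n p x - gridB d n p x) 0

lemma gridPhi_nonneg (d n : ℕ) (p : Fin d → Fin (n+1)) (x : Fin d → ℝ) :
    0 ≤ gridPhi d n p x := le_max_right _ _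

lemma gridA_nonneg (d n : ℕ) (p : Fin d → Fin (n+1)) (x : Fin d → ℝ) : 0 ≤ gridA d n p x :=
  (Finset.le_fold_max _).mpr (Or.inl le_rfl)

lemma gridB_nonneg (d n : ℕ) (p : Fin d → Fin (n+1)) (x : Fin d → ℝ) : 0 ≤ gridB d n p x :=
  (Finset.le_fold_max _).mpr (Or.inl le_rfl)

lemma gridA_ge (d n : ℕ) (p : Fin d → Fin (n+1)) (x : Fin d → ℝ) (k : Fin d) :
    (n:ℝ) * x k - ((p k : ℕ) : ℝ) ≤ gridA d n p x :=
  (Finset.le_fold_max _).mpr (Or.inr ⟨k, Finset.mem_univ k, le_rfl⟩)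

lemma gridB_ge (d n : ℕ) (p : Fin d → Fin (n+1)) (x : Fin d → ℝ) (k : Fin d) :
    ((p k : ℕ) : ℝ) - (n:ℝ) * x k ≤ gridB d n p x :=
  (Finset.le_fold_max _).mpr (Or.inr ⟨k, Finset.mem_univ k, le_rfl⟩)

/-- if `gridPhi` is nonzero then `x` is within `1/n` of the grid point in sup-norm -/
lemma gridPhi_support (d n : ℕ) (p : Fin d → Fin (n+1)) (x : Fin d → ℝ)
    (h : gridPhi d n p x ≠ 0) (k : Fin d) : |(n:ℝ) * x k - ((p k : ℕ) : ℝ)| ≤ 1 := by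
  have hpos : 0 < 1 - gridA d n p x - gridB d n p x := by
    by_contra hc
    exact h (max_eq_right (by linarith))
  have hA := gridA_ge d n p x k
  have hB := gridB_ge d n p x k
  have hA0 := gridA_nonneg d n p x
  have hB0 := gridB_nonneg d n p x
  rw [abs_le]
  constructor <;> linarith

lemma fold_min_dual {ι : Type*} [DecidableEq ι] (s : Finset ι) (f : ι → ℝ) (b : ℝ) :
    s.fold min b f = b - s.fold max 0 (fun i => b - f i) := by
  induction s using Finset.induction_on with
  | empty => simp
  | insert i s' hni ih =>
    rw [Finset.fold_insert hni, Finset.fold_insert hni, ih]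
    rcases le_total (b - f i) (Finset.fold max 0 (fun j => b - f j) s') with h | h
    · rw [max_eq_right h, min_eq_right (by linarith)]
    · rw [max_eq_left h, min_eq_left (by linarith)]; ring

/-- partition of unity -/
lemma gridPhi_partition (d n : ℕ) (hn : 1 ≤ n) (x : Fin d → ℝ)
    (hx : x ∈ Set.Icc (0 : Fin d → ℝ) 1) :
    ∑ p : Fin d → Fin (n+1), gridPhi d n p x = 1 := by
  have hx0 : ∀ k, 0 ≤ x k := fun k => hx.1 k
  have hx1 : ∀ k, x k ≤ 1 := fun k => hx.2 k
  set y : Fin d → ℝ := fun k => (n:ℝ) * x k with hy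
  have hy0 : ∀ k, 0 ≤ y k := fun k => mul_nonneg (Nat.cast_nonneg n) (hx0 k)
  have hyn : ∀ k, y k ≤ n := fun k => by
    have := mul_le_mul_of_nonneg_left (hx1 k) (Nat.cast_nonneg (α := ℝ) n)
    simpa using this
  set c : Fin d → ℕ := fun k => min ⌊y k⌋₊ (n-1) with hc
  have hcn : ∀ k, c k + 1 ≤ n := fun k => by
    have h2 : c k ≤ n - 1 := by rw [hc]; exact min_le_right _ _
    omega
  have hcy : ∀ k, (c k : ℝ) ≤ y k := fun k => by
    have h1 : c k ≤ ⌊y k⌋₊ := min_le_left _ _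
    calc (c k : ℝ) ≤ (⌊y k⌋₊ : ℝ) := Nat.cast_le.mpr h1
      _ ≤ y k := Nat.floor_le (hy0 k)
  have hyc1 : ∀ k, y k ≤ (c k : ℝ) + 1 := fun k => by
    by_cases hfl : ⌊y k⌋₊ ≤ n - 1
    · have : c k = ⌊y k⌋₊ := min_eq_left hfl
      rw [this]
      exact le_of_lt (Nat.lt_floor_add_one (y k))
    · have hck : c k = n - 1 := min_eq_right (le_of_not_ge hfl)
      rw [hck]
      have : ((n - 1 : ℕ) : ℝ) = (n : ℝ) - 1 := by
        rw [Nat.cast_sub hn]; simp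
      rw [this]
      linarith [hyn k]
  set z : Fin d → ℝ := fun k => y k - (c k : ℝ) with hz
  have hz0 : ∀ k, 0 ≤ z k := fun k => by simp [hz]; linarith [hcy k]
  have hz1 : ∀ k, z k ≤ 1 := fun k => by simp [hz]; linarith [hyc1 k]
  set P : Finset (Fin d) → (Fin d → Fin (n+1)) := fun S k =>
    if k ∈ S then (⟨c k + 1, by have := hcn k; omega⟩ : Fin (n+1))
    else (⟨c k, by have := hcn k; omega⟩ : Fin (n+1)) with hP
  have hPval : ∀ S k, ((P S k : ℕ)) = if k ∈ S then c k + 1 else c k := by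
    intro S k; by_cases h : k ∈ S <;> simp [hP, h]
  -- terms outside the image vanish
  have himg : ∀ p ∉ Finset.image P Finset.univ, gridPhi d n p x = 0 := by
    intro p hp
    have hnot : ¬ ∀ k, (p k : ℕ) = c k ∨ (p k : ℕ) = c k + 1 := by
      intro hall
      apply hp
      refine Finset.mem_image.mpr ⟨Finset.univ.filter (fun k => (p k : ℕ) = c k + 1),
        Finset.mem_univ _, ?_⟩
      funext k
      by_cases hk : (p k : ℕ) = c k + 1
      · have : k ∈ Finset.univ.filter (fun k => (p k : ℕ) = c k + 1) := by
          simp [hk]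
        rw [hP]
        simp only [this, if_true]
        exact Fin.ext (by simp [hk])
      · have hpk : (p k : ℕ) = c k := (hall k).resolve_right hk
        have : k ∉ Finset.univ.filter (fun k => (p k : ℕ) = c k + 1) := by
          simp [hk]
        rw [hP]
        simp only [this, if_false]
        exact Fin.ext (by simp [hpk])
    push_neg at hnot
    obtain ⟨k, hk1, hk2⟩ := hnot
    rcases Nat.lt_or_ge (p k : ℕ) (c k) with hlt | hge
    · -- p k ≤ c k - 1 : gridA ≥ 1
      have hcast : ((p k : ℕ) : ℝ) + 1 ≤ (c k : ℝ) := by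
        have : (p k : ℕ) + 1 ≤ c k := hlt
        calc ((p k : ℕ) : ℝ) + 1 = (((p k : ℕ) + 1 : ℕ) : ℝ) := by push_cast; ring
          _ ≤ (c k : ℝ) := Nat.cast_le.mpr this
      have h1 : (1:ℝ) ≤ (n:ℝ) * x k - ((p k : ℕ) : ℝ) := by
        have := hcy k
        simp only [hy] at this
        linarith
      have hA : (1:ℝ) ≤ gridA d n p x := le_trans h1 (gridA_ge d n p x k)
      have hB := gridB_nonneg d n p x
      exact max_eq_right (by linarith)
    · have hgt : c k + 2 ≤ (p k : ℕ) := by omega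
      have hcast : (c k : ℝ) + 2 ≤ ((p k : ℕ) : ℝ) := by
        calc (c k : ℝ) + 2 = ((c k + 2 : ℕ) : ℝ) := by push_cast; ring
          _ ≤ ((p k : ℕ) : ℝ) := Nat.cast_le.mpr hgt
      have h1 : (1:ℝ) ≤ ((p k : ℕ) : ℝ) - (n:ℝ) * x k := by
        have := hyc1 k
        simp only [hy] at this
        linarith
      have hB : (1:ℝ) ≤ gridB d n p x := le_trans h1 (gridB_ge d n p x k)
      have hA := gridA_nonneg d n p x
      exact max_eq_right (by linarith)
  have hPinj : ∀ S ∈ (Finset.univ : Finset (Finset (Fin d))), ∀ T ∈ Finset.univ,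
      P S = P T → S = T := by
    intro S _ T _ hST
    ext k
    have hk := congrArg (fun q => ((q k : ℕ))) hST
    rw [hPval, hPval] at hk
    by_cases hkS : k ∈ S <;> by_cases hkT : k ∈ T <;>
      simp [hkS, hkT] at hk ⊢
  rw [← Finset.sum_subset (Finset.subset_univ (Finset.image P Finset.univ))
    (fun p _ hp => himg p hp)]
  rw [Finset.sum_image hPinj]
  -- identify each term
  have hterm : ∀ S : Finset (Fin d), gridPhi d n (P S) x =
      max (Finset.fold min 1 z S - Finset.fold max 0 z Sᶜ) 0 := by
    intro S
    have hE1 : gridA d n (P S) x = Finset.fold max 0 z Sᶜ := by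
      apply le_antisymm
      · refine (Finset.fold_max_le _).mpr ⟨(Finset.le_fold_max _).mpr (Or.inl le_rfl), ?_⟩
        intro k _
        by_cases hk : k ∈ S
        · rw [hPval]
          simp only [hk, if_true]
          push_cast
          have h1 := hz1 k
          have h0 : (0:ℝ) ≤ Finset.fold max 0 z Sᶜ := (Finset.le_fold_max _).mpr (Or.inl le_rfl)
          simp only [hz, hy] at h1 ⊢
          linarith
        · rw [hPval]
          simp only [hk, if_false]
          refine (Finset.le_fold_max _).mpr (Or.inr ⟨k, Finset.mem_compl.mpr hk, ?_⟩)
          simp [hz, hy]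
      · refine (Finset.fold_max_le _).mpr ⟨gridA_nonneg d n (P S) x, ?_⟩
        intro k hkc
        have hk : k ∉ S := Finset.mem_compl.mp hkc
        have := gridA_ge d n (P S) x k
        rw [hPval] at this
        simp only [hk, if_false] at this
        simp only [hz, hy]
        exact this
    have hE2 : gridB d n (P S) x = Finset.fold max 0 (fun k => 1 - z k) S := by
      apply le_antisymm
      · refine (Finset.fold_max_le _).mpr ⟨(Finset.le_fold_max _).mpr (Or.inl le_rfl), ?_⟩
        intro k _
        by_cases hk : k ∈ S
        · rw [hPval]
          simp only [hk, if_true]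
          refine (Finset.le_fold_max _).mpr (Or.inr ⟨k, hk, ?_⟩)
          push_cast
          simp only [hz, hy]
          ring_nf
          rfl
        · rw [hPval]
          simp only [hk, if_false]
          have h0 := hz0 k
          have h0' : (0:ℝ) ≤ Finset.fold max 0 (fun k => 1 - z k) S :=
            (Finset.le_fold_max _).mpr (Or.inl le_rfl)
          simp only [hz, hy] at h0
          linarith
      · refine (Finset.fold_max_le _).mpr ⟨gridB_nonneg d n (P S) x, ?_⟩
        intro k hk
        have := gridB_ge d n (P S) x k
        rw [hPval] at this
        simp only [hk, if_true] at this
        push_cast at this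
        simp only [hz, hy]
        linarith
    rw [gridPhi, hE1, hE2, fold_min_dual]
    ring_nf
  rw [Finset.sum_congr rfl (fun S _ => hterm S)]
  have := corePartition d z 0 1 (by norm_num) hz0 hz1
  rw [this]
  norm_num

/-! ### Realization of the grid network -/

lemma Sc.coord {a : ℕ} (k : Fin a) (α c : ℝ) : Sc 0 a (fun x => α * x k + c) := by
  refine (Sc.affine (fun j => if j = k then α else 0) c).congr ?_
  intro x
  congr 1
  rw [Finset.sum_eq_single k]
  · simp
  · intro j _ hj; simp [hj]
  · intro h; exact absurd (Finset.mem_univ k) h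

lemma gridA_Sc (d n : ℕ) (p : Fin d → Fin (n+1)) :
    Sc d d (fun x => gridA d n p x) := by
  have h := Sc.foldmax (L := 0) (a := d) Finset.univ
    (fun k x => (n:ℝ) * x k - ((p k : ℕ) : ℝ))
    (fun k _ => (Sc.coord k (n:ℝ) (-((p k : ℕ) : ℝ))).congr (fun x => by ring))
  have hdc : 0 + (Finset.univ : Finset (Fin d)).card = d := by simp
  rw [hdc] at h
  exact h.congr (fun x => rfl)

lemma gridB_Sc (d n : ℕ) (p : Fin d → Fin (n+1)) :
    Sc d d (fun x => gridB d n p x) := by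
  have h := Sc.foldmax (L := 0) (a := d) Finset.univ
    (fun k x => ((p k : ℕ) : ℝ) - (n:ℝ) * x k)
    (fun k _ => (Sc.coord k (-(n:ℝ)) (((p k : ℕ) : ℝ))).congr (fun x => by ring))
  have hdc : 0 + (Finset.univ : Finset (Fin d)).card = d := by simp
  rw [hdc] at h
  exact h.congr (fun x => rfl)

lemma gridPhi_Sc (d n : ℕ) (p : Fin d → Fin (n+1)) :
    Sc (d + 1) d (fun x => gridPhi d n p x) := by
  have hu : Sc d d (fun x => 1 - gridA d n p x - gridB d n p x) :=
    ((gridA_Sc d n p).affcomb (gridB_Sc d n p) (-1) (-1) 1).congr (fun x => by ring)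
  exact hu.max0.congr (fun x => rfl)

lemma fhat_Sc (d n : ℕ) (coef : (Fin d → Fin (n+1)) → ℝ) :
    Sc (d + 1) d (fun x => ∑ p : Fin d → Fin (n+1), coef p * gridPhi d n p x) :=
  Sc.sum Finset.univ (fun p x => coef p * gridPhi d n p x)
    (fun p _ => (gridPhi_Sc d n p).smul (coef p))

/-- **Fixed-depth uniform ReLU approximation to prescribed tolerance.**
For `f : [0,1]^d → ℝ` Lipschitz of rank `L₀` (Euclidean norm), every `ε > 0` and every
fixed integer depth `𝓛₀ ≥ 29 + 2d`, there are an integer width `W ≥ 3^{d+4} d` and `f̂`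
realized by a ReLU network of depth `𝓛₀` and width `W` with
`sup_{x ∈ [0,1]^d} |f(x) − f̂(x)| ≤ ε`. -/
theorem relu_fixed_depth_tolerance (d : ℕ) (hd : 1 ≤ d)
    (f : (Fin d → ℝ) → ℝ) (L₀ : ℝ) (hL₀ : 0 ≤ L₀)
    (hf : ∀ x ∈ Set.Icc (0 : Fin d → ℝ) 1, ∀ y ∈ Set.Icc (0 : Fin d → ℝ) 1,
      |f x - f y| ≤ L₀ * eudist d x y) :
    ∀ ε > (0 : ℝ), ∀ Ldepth : ℕ, 29 + 2 * d ≤ Ldepth →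
      ∃ W : ℕ, 3 ^ (d + 4) * d ≤ W ∧
        ∃ fhat : (Fin d → ℝ) → (Fin 1 → ℝ),
          RealizedBy W Ldepth d 1 fhat ∧
          ∀ x ∈ Set.Icc (0 : Fin d → ℝ) 1, |f x - fhat x 0| ≤ ε := by
  intro ε hε Ldepth hLd
  set n : ℕ := max 1 ⌈(L₀ * Real.sqrt d) / ε⌉₊ with hndef
  have hn : 1 ≤ n := le_max_left _ _
  have hnpos : (0:ℝ) < n := by exact_mod_cast hn
  set coef : (Fin d → Fin (n+1)) → ℝ :=
    fun p => f (fun k => ((p k : ℕ) : ℝ) / n) with hcoef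
  -- the network function
  have hsc : Sc (d + 1) d (fun x => ∑ p : Fin d → Fin (n+1), coef p * gridPhi d n p x) :=
    fhat_Sc d n coef
  have hsc' : Sc Ldepth d (fun x => ∑ p : Fin d → Fin (n+1), coef p * gridPhi d n p x) :=
    hsc.pad_le (by omega)
  obtain ⟨W0, hW0⟩ := hsc'
  refine ⟨3 ^ (d + 4) * d + W0, Nat.le_add_right _ _,
    (fun x => fun _ : Fin 1 => ∑ p : Fin d → Fin (n+1), coef p * gridPhi d n p x),
    realized_mono hW0 (Nat.le_add_left _ _), ?_⟩
  -- error bound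
  intro x hx
  have hpart := gridPhi_partition d n hn x hx
  set bound : ℝ := L₀ * (Real.sqrt d / n) with hbound
  have hbound0 : 0 ≤ bound := by
    apply mul_nonneg hL₀
    positivity
  have hkey : ∀ p : Fin d → Fin (n+1),
      |f x - coef p| * gridPhi d n p x ≤ bound * gridPhi d n p x := by
    intro p
    by_cases hzero : gridPhi d n p x = 0
    · rw [hzero]; simp
    · have hq : (fun k => ((p k : ℕ) : ℝ) / n) ∈ Set.Icc (0 : Fin d → ℝ) 1 := by
        constructor
        · intro k
          exact div_nonneg (Nat.cast_nonneg _) (le_of_lt hnpos)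
        · intro k
          rw [Pi.one_apply, div_le_one hnpos]
          exact_mod_cast Fin.is_le (p k)
      have hdist : eudist d x (fun k => ((p k : ℕ) : ℝ) / n) ≤ Real.sqrt d / n := by
        rw [eudist]
        have hterm : ∀ k : Fin d, (x k - ((p k : ℕ) : ℝ) / n) ^ 2 ≤ ((1:ℝ) / n) ^ 2 := by
          intro k
          have h1 := gridPhi_support d n p x hzero k
          have h2 : |x k - ((p k : ℕ) : ℝ) / n| ≤ 1 / n := by
            have heq : x k - ((p k : ℕ) : ℝ) / n = ((n:ℝ) * x k - ((p k : ℕ) : ℝ)) / n := by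
              field_simp
            rw [heq, abs_div, abs_of_pos hnpos]
            gcongr
          calc (x k - ((p k : ℕ) : ℝ) / n) ^ 2 = |x k - ((p k : ℕ) : ℝ) / n| ^ 2 := by
                rw [sq_abs]
            _ ≤ ((1:ℝ) / n) ^ 2 := by
                apply pow_le_pow_left₀ (abs_nonneg _) h2
        calc Real.sqrt (∑ k, (x k - ((p k : ℕ) : ℝ) / n) ^ 2)
            ≤ Real.sqrt (∑ _k : Fin d, (1 / n : ℝ) ^ 2) := by
              apply Real.sqrt_le_sqrt
              exact Finset.sum_le_sum (fun k _ => hterm k)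
          _ = Real.sqrt ((d : ℝ) * (1 / n) ^ 2) := by
              rw [Finset.sum_const, Finset.card_univ, Fintype.card_fin, nsmul_eq_mul]
          _ = Real.sqrt d * (1 / n) := by
              rw [Real.sqrt_mul (Nat.cast_nonneg d), Real.sqrt_sq (by positivity)]
          _ = Real.sqrt d / n := by ring
      have hlip := hf x hx _ hq
      have : |f x - coef p| ≤ bound := by
        rw [hcoef]
        calc |f x - f (fun k => ((p k : ℕ) : ℝ) / n)| ≤ L₀ * eudist d x _ := hlip
          _ ≤ L₀ * (Real.sqrt d / n) := mul_le_mul_of_nonneg_left hdist hL₀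
      exact mul_le_mul_of_nonneg_right this (gridPhi_nonneg d n p x)
  have hdiff : f x - (∑ p : Fin d → Fin (n+1), coef p * gridPhi d n p x) =
      ∑ p : Fin d → Fin (n+1), (f x - coef p) * gridPhi d n p x := by
    rw [Finset.sum_congr rfl (fun p _ => sub_mul (f x) (coef p) (gridPhi d n p x)),
      Finset.sum_sub_distrib, ← Finset.mul_sum, hpart, mul_one]
  have habs : |f x - (∑ p : Fin d → Fin (n+1), coef p * gridPhi d n p x)| ≤ bound := by
    rw [hdiff]
    calc |∑ p : Fin d → Fin (n+1), (f x - coef p) * gridPhi d n p x|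
        ≤ ∑ p : Fin d → Fin (n+1), |(f x - coef p) * gridPhi d n p x| :=
          Finset.abs_sum_le_sum_abs _ _
      _ ≤ ∑ p : Fin d → Fin (n+1), bound * gridPhi d n p x := by
          apply Finset.sum_le_sum
          intro p _
          rw [abs_mul, abs_of_nonneg (gridPhi_nonneg d n p x)]
          exact hkey p
      _ = bound * ∑ p : Fin d → Fin (n+1), gridPhi d n p x := by rw [← Finset.mul_sum]
      _ = bound := by rw [hpart, mul_one]
  have hfin : bound ≤ ε := by
    rw [hbound]
    have hceil : (L₀ * Real.sqrt d) / ε ≤ (n : ℝ) := by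
      calc (L₀ * Real.sqrt d) / ε ≤ (⌈(L₀ * Real.sqrt d) / ε⌉₊ : ℝ) := Nat.le_ceil _
        _ ≤ (n : ℝ) := by exact_mod_cast le_max_right _ _
    rw [mul_div_assoc'] at *
    rw [div_le_iff₀ hnpos]
    calc L₀ * Real.sqrt d ≤ ((L₀ * Real.sqrt d) / ε) * ε := by
          rw [div_mul_cancel₀]
          exact ne_of_gt hε
      _ ≤ (n : ℝ) * ε := mul_le_mul_of_nonneg_right hceil (le_of_lt hε)
      _ = ε * n := by ring
  exact le_trans habs hfin
end
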